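/- arXiv:0901.0327 — 8 statements merged into one kernel-verified Lean document; each statement's English description precedes it below -/
import Mathlib

section
/- For complex numbers λ₀,...,λₙ, the fundamental function Φ(x) = (1/2πi) ∮_{Γ_r} e^{xz}/((z-λ₀)···(z-λₙ)) dz (where Γ_r is a circle of radius r surrounding all λⱼ) satisfies Φ^{(k)}(0) = 0 for k = 0,...,n-1, and for k ≥ n, Φ^{(k)}(0) = Σ_{s₀+...+sₙ = k-n} λ₀^{s₀}···λₙ^{sₙ}. -/
/-!
Differentiating under the integral sign gives `Φ⁽ᵏ⁾(0) = (2πi)⁻¹ ∮ zᵏ / ∏ⱼ (z - λⱼ) dz`.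
On the circle `|z| = r > |λⱼ|` each factor expands as a geometric series
`(z - λ)⁻¹ = ∑ₘ λᵐ z⁻⁽ᵐ⁺¹⁾`, and multiplying these absolutely convergent series gives
`∏ⱼ (z - λⱼ)⁻¹ = ∑ₛ λˢ z⁻⁽ⁿ⁺¹⁺|s|⁾` over multi-indices `s : Fin (n + 1) → ℕ`.
Integrating term by term, `∮ zᵏ z⁻ᴹ dz` is `2πi` if `M = k + 1` and `0` otherwise, so exactly
the multi-indices with `|s| = k - n` survive.
-/

open Complex Metric Finset

section PiProduct

variable {R : Type*} [NormedCommRing R] {β : Type*}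

theorem summable_norm_prod_pi {N : ℕ} {f : Fin N → β → R}
    (hf : ∀ j, Summable fun b => ‖f j b‖) :
    Summable fun s : Fin N → β => ‖∏ j, f j (s j)‖ := by
  induction N with
  | zero => exact .of_finite
  | succ N ih =>
    have hprod := (hf 0).mul_norm (ih fun j => hf j.succ)
    rw [← (Fin.consEquiv fun _ => β).summable_iff]
    refine .of_nonneg_of_le (fun _ => norm_nonneg _) (fun p => ?_) hprod
    simp [Fin.consEquiv, Fin.prod_univ_succ]

theorem hasSum_prod_pi [CompleteSpace R] {N : ℕ} {f : Fin N → β → R} {a : Fin N → R}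
    (hf : ∀ j, HasSum (f j) (a j)) (hf_norm : ∀ j, Summable fun b => ‖f j b‖) :
    HasSum (fun s : Fin N → β => ∏ j, f j (s j)) (∏ j, a j) := by
  induction N with
  | zero => simp
  | succ N ih =>
    have htail : HasSum (fun t : Fin N → β => ∏ j : Fin N, f j.succ (t j))
        (∏ j : Fin N, a j.succ) :=
      ih (fun j => hf j.succ) fun j => hf_norm j.succ
    have hsum : Summable fun p : β × (Fin N → β) => f 0 p.1 * ∏ j : Fin N, f j.succ (p.2 j) :=
      summable_mul_of_summable_norm (f := f 0)
        (g := fun t : Fin N → β => ∏ j : Fin N, f j.succ (t j)) (hf_norm 0)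
        (summable_norm_prod_pi fun j : Fin N => hf_norm j.succ)
    rw [Fin.prod_univ_succ, ← (Fin.consEquiv fun _ => β).hasSum_iff]
    exact ((hf 0).mul htail hsum).congr_fun fun _ => by simp [Fin.prod_univ_succ]

end PiProduct

section GeometricExpansion

variable {K : Type*} [NormedField K]

theorem hasSum_inv_sub {μ z : K} (h : ‖μ‖ < ‖z‖) :
    HasSum (fun m : ℕ => μ ^ m * z⁻¹ ^ (m + 1)) (z - μ)⁻¹ := by
  have hz : z ≠ 0 := norm_pos_iff.mp ((norm_nonneg μ).trans_lt h)
  have hq : ‖μ * z⁻¹‖ < 1 := by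
    rwa [norm_mul, norm_inv, ← div_eq_mul_inv, div_lt_one (norm_pos_iff.mpr hz)]
  have hsum := (hasSum_geometric_of_norm_lt_one hq).mul_right z⁻¹
  rw [← mul_inv, sub_mul, one_mul, inv_mul_cancel_right₀ hz] at hsum
  exact hsum.congr_fun fun m => by ring

theorem summable_norm_pow_mul_inv_pow_succ {μ z : K} (h : ‖μ‖ < ‖z‖) :
    Summable fun m : ℕ => ‖μ ^ m * z⁻¹ ^ (m + 1)‖ := by
  have hreal := hasSum_inv_sub (K := ℝ) (μ := ‖μ‖) (z := ‖z‖) (by simpa using h)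
  simpa using hreal.summable

theorem prod_pow_mul_pow_succ {M : Type*} [CommMonoid M] {N : ℕ} (μ : Fin N → M) (w : M)
    (s : Fin N → ℕ) :
    ∏ j, μ j ^ s j * w ^ (s j + 1) = (∏ j, μ j ^ s j) * w ^ (N + ∑ j, s j) := by
  rw [prod_mul_distrib, prod_pow_eq_pow_sum, sum_add_distrib, add_comm]
  simp

variable {N : ℕ} (μ : Fin N → K) {z : K}

theorem summable_norm_prod_pow_mul_inv_pow (h : ∀ j, ‖μ j‖ < ‖z‖) :
    Summable fun s : Fin N → ℕ => ‖(∏ j, μ j ^ s j) * z⁻¹ ^ (N + ∑ j, s j)‖ :=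
  (summable_norm_prod_pi (f := fun j m => μ j ^ m * z⁻¹ ^ (m + 1))
    fun j => summable_norm_pow_mul_inv_pow_succ (h j)).congr fun s => by rw [prod_pow_mul_pow_succ]

theorem hasSum_inv_prod_sub [CompleteSpace K] (h : ∀ j, ‖μ j‖ < ‖z‖) :
    HasSum (fun s : Fin N → ℕ => (∏ j, μ j ^ s j) * z⁻¹ ^ (N + ∑ j, s j))
      (∏ j, (z - μ j))⁻¹ := by
  rw [← prod_inv_distrib]
  exact (hasSum_prod_pi (f := fun j m => μ j ^ m * z⁻¹ ^ (m + 1))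
    (fun j => hasSum_inv_sub (h j)) fun j => summable_norm_pow_mul_inv_pow_succ (h j)).congr_fun
      fun s => by rw [prod_pow_mul_pow_succ]

end GeometricExpansion

section CircleIntegral

variable {E : Type*} [NormedAddCommGroup E] [NormedSpace ℂ E]

theorem hasSum_circleIntegral_of_norm_le {ι : Type*} [Countable ι] {F : ι → ℂ → E} {f : ℂ → E}
    {c : ℂ} {R : ℝ} {u : ι → ℝ} (hF : ∀ i, CircleIntegrable (F i) c R) (hu : Summable u)
    (hFu : ∀ i, ∀ z ∈ sphere c |R|, ‖F i z‖ ≤ u i)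
    (hf : ∀ z ∈ sphere c |R|, HasSum (fun i => F i z) (f z)) :
    HasSum (fun i => ∮ z in C(c, R), F i z) (∮ z in C(c, R), f z) := by
  refine intervalIntegral.hasSum_integral_of_dominated_convergence (fun i _ => |R| * u i)
    (fun i => (hF i).out.aestronglyMeasurable_restrict_uIoc) (fun i => .of_forall fun θ _ => ?_)
    (.of_forall fun _ _ => hu.mul_left _) intervalIntegrable_const
    (.of_forall fun θ _ => (hf _ (circleMap_mem_sphere' c R θ)).const_smul _)
  rw [norm_smul, deriv_circleMap, norm_mul, norm_circleMap_zero, norm_I, mul_one]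
  exact mul_le_mul_of_nonneg_left (hFu i _ (circleMap_mem_sphere' c R θ)) (abs_nonneg R)

theorem circleIntegral_pow_mul_inv_pow {R : ℝ} (hR : 0 < R) (k M : ℕ) :
    ∮ z in C(0, R), z ^ k * z⁻¹ ^ M = if M = k + 1 then 2 * Real.pi * I else 0 := by
  have hzpow : Set.EqOn (fun z : ℂ => z ^ k * z⁻¹ ^ M) (fun z => (z - 0) ^ ((k : ℤ) - M))
      (sphere 0 R) := fun z hz => by
    have hz0 : z ≠ 0 := ne_zero_of_mem_sphere hR.ne' ⟨z, hz⟩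
    dsimp only
    rw [sub_zero, zpow_sub₀ hz0, zpow_natCast, zpow_natCast, div_eq_mul_inv, inv_pow]
  rw [circleIntegral.integral_congr hR.le hzpow]
  split_ifs with hM
  · simp only [hM, Nat.cast_succ, sub_add_cancel_left, zpow_neg_one]
    exact circleIntegral.integral_sub_center_inv 0 hR.ne'
  · exact circleIntegral.integral_sub_zpow_of_ne (by omega) 0 0 R

theorem hasSum_circleIntegral_pow_mul_inv_prod_sub {N : ℕ} (μ : Fin N → ℂ) {R : ℝ} (hR : 0 < R)
    (hμ : ∀ j, ‖μ j‖ < R) (k : ℕ) :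
    HasSum (fun s : Fin N → ℕ =>
        (∏ j, μ j ^ s j) * if N + ∑ j, s j = k + 1 then 2 * Real.pi * I else 0)
      (∮ z in C(0, R), z ^ k * (∏ j, (z - μ j))⁻¹) := by
  have hsphere : ∀ z ∈ sphere (0 : ℂ) |R|, ‖z‖ = R := fun z hz => by
    rw [mem_sphere_zero_iff_norm.mp hz, abs_of_pos hR]
  have hseries : HasSum
      (fun s : Fin N → ℕ => ∮ z in C(0, R), z ^ k * ((∏ j, μ j ^ s j) * z⁻¹ ^ (N + ∑ j, s j)))
      (∮ z in C(0, R), z ^ k * (∏ j, (z - μ j))⁻¹) := by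
    refine hasSum_circleIntegral_of_norm_le
      (u := fun s => R ^ k * ‖(∏ j, μ j ^ s j) * (R : ℂ)⁻¹ ^ (N + ∑ j, s j)‖) (fun s => ?_)
      ((summable_norm_prod_pow_mul_inv_pow μ fun j => ?_).mul_left _) (fun s z hz => ?_)
      fun z hz => (hasSum_inv_prod_sub μ fun j => ?_).mul_left _
    · refine ContinuousOn.circleIntegrable hR.le ?_
      have : sphere (0 : ℂ) R ⊆ {0}ᶜ := fun z hz => ne_zero_of_mem_sphere hR.ne' ⟨z, hz⟩
      exact (continuousOn_pow k).mul (continuousOn_const.mul ((continuousOn_inv₀.mono this).pow _))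
    · simpa [abs_of_pos hR] using hμ j
    · -- on the circle the norm of each term only depends on `‖z‖ = R`
      simp [hsphere z hz, abs_of_pos hR]
    · rw [hsphere z hz]; exact hμ j
  refine hseries.congr_fun fun s => ?_
  simp_rw [mul_left_comm _ (∏ j, μ j ^ s j)]
  rw [circleIntegral.integral_const_mul, circleIntegral_pow_mul_inv_pow hR]

theorem two_pi_I_inv_mul_circleIntegral_pow_mul_inv_prod_sub {n : ℕ} (lam : Fin (n + 1) → ℂ)
    {R : ℝ} (hR : ∀ j, ‖lam j‖ < R) (k : ℕ) :
    (2 * Real.pi * I)⁻¹ * ∮ z in C(0, R), z ^ k * (∏ j, (z - lam j))⁻¹ =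
      if n ≤ k then ∑ s ∈ Nat.antidiagonalTuple (n + 1) (k - n), ∏ j, lam j ^ s j else 0 := by
  have hseries := hasSum_circleIntegral_pow_mul_inv_prod_sub lam
    ((norm_nonneg _).trans_lt (hR 0)) hR k
  split_ifs with hnk
  · rw [hseries.unique (hasSum_sum_of_ne_finset_zero fun s hs => ?_), mul_sum]
    · refine sum_congr rfl fun s hs => ?_
      rw [Nat.mem_antidiagonalTuple] at hs
      rw [if_pos (by omega), mul_comm (∏ j, _), inv_mul_cancel_left₀ two_pi_I_ne_zero]
    · rw [Nat.mem_antidiagonalTuple] at hs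
      rw [if_neg (by omega), mul_zero]
  · have hzero : ∀ s : Fin (n + 1) → ℕ,
        (∏ j, lam j ^ s j) * (if n + 1 + ∑ j, s j = k + 1 then 2 * Real.pi * I else 0) = 0 :=
      fun s => by rw [if_neg (by omega), mul_zero]
    rw [hseries.unique (by simpa only [hzero] using hasSum_zero), mul_zero]

theorem norm_circleMap_le (c : ℂ) (R θ : ℝ) : ‖circleMap c R θ‖ ≤ ‖c‖ + |R| := by
  simpa [circleMap] using norm_add_le c (R * exp (θ * I))

theorem hasDerivAt_circleIntegral_exp_mul_smul {g : ℂ → E} {c : ℂ} {R : ℝ}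
    (hg : CircleIntegrable g c R) (x₀ : ℂ) :
    HasDerivAt (fun x => ∮ z in C(c, R), exp (x * z) • g z)
      (∮ z in C(c, R), exp (x₀ * z) • z • g z) x₀ := by
  have hexp : ∀ x, ContinuousOn (fun z => exp (x * z)) (sphere c |R|) := fun x => by fun_prop
  have hint : ∀ x, CircleIntegrable (fun z => exp (x * z) • g z) c R := fun x =>
    hg.continuousOn_smul (hexp x)
  have hint' : CircleIntegrable (fun z => exp (x₀ * z) • z • g z) c R :=
    (hg.continuousOn_smul continuousOn_id).continuousOn_smul (hexp x₀)
  set ρ := ‖c‖ + |R|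
  refine (intervalIntegral.hasDerivAt_integral_of_dominated_loc_of_deriv_le
    (F' := fun x θ => deriv (circleMap c R) θ • exp (x * circleMap c R θ) •
      circleMap c R θ • g (circleMap c R θ))
    (bound := fun θ => |R| * Real.exp ((‖x₀‖ + 1) * ρ) * ρ * ‖g (circleMap c R θ)‖)
    (ball_mem_nhds x₀ one_pos) (.of_forall fun x => (hint x).out.aestronglyMeasurable_restrict_uIoc)
    (hint x₀).out hint'.out.aestronglyMeasurable_restrict_uIoc
    (.of_forall fun θ _ x hx => ?_) (hg.norm.const_mul _)
    (.of_forall fun θ _ x _ => ?_)).2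
  · have hx' : ‖x‖ ≤ ‖x₀‖ + 1 := norm_le_of_mem_closedBall (ball_subset_closedBall hx)
    have hz := norm_circleMap_le c R θ
    have hexp : ‖exp (x * circleMap c R θ)‖ ≤ Real.exp ((‖x₀‖ + 1) * ρ) := by
      rw [norm_exp, Real.exp_le_exp]
      refine (re_le_norm _).trans ?_
      rw [norm_mul]
      exact mul_le_mul hx' hz (norm_nonneg _) (by positivity)
    rw [norm_smul, norm_smul, norm_smul, deriv_circleMap, norm_mul, norm_circleMap_zero, norm_I,
      mul_one, ← mul_assoc, ← mul_assoc]
    gcongr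
  · set w := circleMap c R θ
    have hderiv : HasDerivAt (fun x => exp (x * w) • g w) (exp (x * w) • w • g w) x := by
      simpa [smul_smul] using ((hasDerivAt_id x).mul_const w).cexp.smul_const (g w)
    exact hderiv.const_smul _

theorem iteratedDeriv_circleIntegral_exp_mul_smul {g : ℂ → E} {c : ℂ} {R : ℝ}
    (hg : CircleIntegrable g c R) (k : ℕ) :
    iteratedDeriv k (fun x => ∮ z in C(c, R), exp (x * z) • g z) =
      fun x => ∮ z in C(c, R), exp (x * z) • z ^ k • g z := by
  induction k with
  | zero => simp
  | succ k ih =>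
    have hgk : CircleIntegrable (fun z => z ^ k • g z) c R :=
      hg.continuousOn_smul (continuousOn_pow k)
    rw [iteratedDeriv_succ, ih]
    funext x
    rw [(hasDerivAt_circleIntegral_exp_mul_smul hgk x).deriv]
    simp_rw [smul_smul, pow_succ']

end CircleIntegral

/-- Taylor derivatives at 0 of the fundamental function defined by a contour integral. -/
theorem stmt_0 (n : ℕ) (lam : Fin (n + 1) → ℂ) (r : ℝ)
    (hr : ∀ j, ‖lam j‖ < r)
    (Φ : ℂ → ℂ)
    (hΦ : ∀ x, Φ x = (2 * Real.pi * Complex.I)⁻¹ *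
      ∮ z in C(0, r), Complex.exp (x * z) / ∏ j, (z - lam j)) :
    (∀ k < n, iteratedDeriv k Φ 0 = 0) ∧
    (∀ k, n ≤ k → iteratedDeriv k Φ 0 =
      ∑ s ∈ Finset.Nat.antidiagonalTuple (n + 1) (k - n), ∏ j, lam j ^ s j) := by
  have hr0 : 0 < r := (norm_nonneg _).trans_lt (hr 0)
  have hg : CircleIntegrable (fun z => (∏ j, (z - lam j))⁻¹) 0 r := by
    refine ContinuousOn.circleIntegrable hr0.le (ContinuousOn.inv₀ (by fun_prop) fun z hz => ?_)
    refine prod_ne_zero_iff.mpr fun j _ => sub_ne_zero.mpr fun hzj => ?_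
    rw [mem_sphere_zero_iff_norm, hzj] at hz
    exact (hr j).ne hz
  have hΦ_deriv : ∀ k, iteratedDeriv k Φ 0 =
      (2 * Real.pi * I)⁻¹ * ∮ z in C(0, r), z ^ k * (∏ j, (z - lam j))⁻¹ := fun k => by
    rw [funext hΦ]
    simp_rw [div_eq_mul_inv, ← smul_eq_mul (exp _)]
    rw [iteratedDeriv_const_mul_field, iteratedDeriv_circleIntegral_exp_mul_smul hg]
    simp
  refine ⟨fun k hk => ?_, fun k hk => ?_⟩
  · rw [hΦ_deriv, two_pi_I_inv_mul_circleIntegral_pow_mul_inv_prod_sub lam hr, if_neg (by omega)]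
  · rw [hΦ_deriv, two_pi_I_inv_mul_circleIntegral_pow_mul_inv_prod_sub lam hr, if_pos hk]
end

section
/- If λ₀,...,λₙ are real, then the fundamental function Φ_{(λ₀,...,λₙ)}(x) is strictly positive for all x > 0. -/
/-!
Write `Φ_λ(x) = (2πi)⁻¹ ∮ e^{xz} / ∏ⱼ (z - λⱼ) dz`. Splitting off the last factor `z - a`,
`(e^{xz} - e^{ax}) / (z - a) = ∫₀ˣ e^{a(x-t)} e^{tz} dt`, while `∮ e^{ax} / ∏ⱼ (z - λⱼ) dz = 0`
as soon as there are at least two factors (the integrand decays like `|z|⁻²`). Exchanging the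
two integrals gives `Φ_{(λ, a)}(x) = ∫₀ˣ e^{a(x-t)} Φ_λ(t) dt`, starting from `Φ_{(a)}(x) = e^{ax}`,
so every `Φ_λ` is real and, by induction, a convolution of positive functions, hence positive
for `x > 0`.
-/

open MeasureTheory Metric Set Complex Filter Real Topology

section InvProd

variable {ι : Type*} [Fintype ι] {μ : ι → ℂ} {r : ℝ}

lemma prod_sub_ne_zero_of_le_norm (hμ : ∀ j, ‖μ j‖ < r) {z : ℂ} (hz : r ≤ ‖z‖) :
    ∏ j, (z - μ j) ≠ 0 :=
  Finset.prod_ne_zero_iff.2 fun j _ h => (hμ j).not_ge (by rwa [← sub_eq_zero.1 h])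

lemma circleIntegral_inv_prod_sub_eq_of_le (hμ : ∀ j, ‖μ j‖ < r) (hr : 0 < r) {R : ℝ}
    (hR : r ≤ R) :
    (∮ z in C(0, R), (∏ j, (z - μ j))⁻¹) = ∮ z in C(0, r), (∏ j, (z - μ j))⁻¹ := by
  refine circleIntegral_eq_of_differentiable_on_annulus_off_countable hr hR countable_empty
    ?_ fun z hz => ?_
  · refine ContinuousOn.inv₀ (by fun_prop) fun z hz => prod_sub_ne_zero_of_le_norm hμ ?_
    simpa using hz.2
  · refine (DifferentiableAt.fun_finsetProd fun j _ => by fun_prop).inv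
      (prod_sub_ne_zero_of_le_norm hμ ?_)
    exact le_of_lt (by simpa using hz.1.2)

lemma norm_circleIntegral_inv_prod_sub_le (hμ : ∀ j, ‖μ j‖ < r) (hr : 0 < r) {R : ℝ}
    (hR : r < R) :
    ‖∮ z in C(0, R), (∏ j, (z - μ j))⁻¹‖ ≤ 2 * π * R * ((R - r) ^ Fintype.card ι)⁻¹ := by
  refine circleIntegral.norm_integral_le_of_norm_le_const (by linarith) fun z hz => ?_
  rw [mem_sphere_zero_iff_norm] at hz
  have hfactor : ∀ j, R - r ≤ ‖z - μ j‖ := fun j => by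
    linarith [norm_sub_norm_le z (μ j), hμ j]
  rw [norm_inv, norm_prod]
  refine inv_anti₀ (pow_pos (by linarith) _) ?_
  calc (R - r) ^ Fintype.card ι = ∏ _j : ι, (R - r) := by simp
    _ ≤ ∏ j, ‖z - μ j‖ := Finset.prod_le_prod (fun _ _ => by linarith) fun j _ => hfactor j

lemma circleIntegral_inv_prod_sub_eq_zero (hμ : ∀ j, ‖μ j‖ < r) (hι : 2 ≤ Fintype.card ι) :
    (∮ z in C(0, r), (∏ j, (z - μ j))⁻¹) = 0 := by
  have : Nonempty ι := Fintype.card_pos_iff.1 (by omega)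
  have hr : 0 < r := (norm_nonneg _).trans_lt (hμ (Classical.arbitrary ι))
  have hbound : ∀ᶠ s in atTop,
      ‖∮ z in C(0, r), (∏ j, (z - μ j))⁻¹‖ ≤ 2 * π * (r * (s⁻¹) ^ 2 + s⁻¹) := by
    filter_upwards [eventually_ge_atTop 1] with s hs
    rw [← circleIntegral_inv_prod_sub_eq_of_le hμ hr (by linarith : r ≤ r + s)]
    refine (norm_circleIntegral_inv_prod_sub_le hμ hr (by linarith : r < r + s)).trans ?_
    calc 2 * π * (r + s) * ((r + s - r) ^ Fintype.card ι)⁻¹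
        ≤ 2 * π * (r + s) * (s ^ 2)⁻¹ := by
          rw [add_sub_cancel_left]
          gcongr
      _ = 2 * π * (r * (s⁻¹) ^ 2 + s⁻¹) := by field_simp
  have hlim : Tendsto (fun s : ℝ => 2 * π * (r * (s⁻¹) ^ 2 + s⁻¹)) atTop (𝓝 0) := by
    simpa using ((tendsto_inv_atTop_zero.pow 2).const_mul r |>.add
      tendsto_inv_atTop_zero).const_mul (2 * π)
  exact norm_le_zero_iff.1 (ge_of_tendsto hlim hbound)

end InvProd

noncomputable def expConvolution (a : ℝ) (g : ℝ → ℝ) (x : ℝ) : ℝ :=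
  ∫ t in (0 : ℝ)..x, rexp (a * (x - t)) * g t

section ExpConvolution

variable {a : ℝ} {g : ℝ → ℝ}

lemma continuous_expConvolution (hg : Continuous g) : Continuous (expConvolution a g) :=
  intervalIntegral.continuous_parametric_intervalIntegral_of_continuous (by fun_prop)
    continuous_id

lemma expConvolution_pos (hg : Continuous g) (hpos : ∀ t, 0 < t → 0 < g t) {x : ℝ}
    (hx : 0 < x) : 0 < expConvolution a g x :=
  intervalIntegral.intervalIntegral_pos_of_pos_on
    ((by fun_prop : Continuous fun t => rexp (a * (x - t)) * g t).intervalIntegrable 0 x)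
    (fun t ht => mul_pos (exp_pos _) (hpos t ht.1)) hx

end ExpConvolution

lemma circleIntegral_intervalIntegral_swap {E : Type*} [NormedAddCommGroup E] [NormedSpace ℂ E]
    [CompleteSpace E] {r : ℝ} (hr : 0 ≤ r) {F : ℝ → ℂ → E}
    (hF : ContinuousOn (Function.uncurry F) (univ ×ˢ sphere 0 r)) (a b : ℝ) :
    (∮ z in C(0, r), ∫ t in a..b, F t z) = ∫ t in a..b, ∮ z in C(0, r), F t z := by
  have hG : Continuous fun p : ℝ × ℝ =>
      deriv (circleMap 0 r) p.1 • F p.2 (circleMap 0 r p.1) := by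
    refine Continuous.smul (by simp only [deriv_circleMap]; fun_prop) ?_
    exact hF.comp_continuous (f := fun p : ℝ × ℝ => (p.2, circleMap 0 r p.1)) (by fun_prop)
      fun p => ⟨mem_univ _, circleMap_mem_sphere _ hr _⟩
  simp only [circleIntegral, ← intervalIntegral.integral_smul]
  exact intervalIntegral_intervalIntegral_swap
    ((hG.continuousOn.integrableOn_compact (isCompact_uIcc.prod isCompact_uIcc)).mono_set
      (prod_mono uIoc_subset_uIcc uIoc_subset_uIcc))

lemma integral_exp_mul_sub_mul_exp {z c : ℂ} (hzc : z ≠ c) (x : ℝ) :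
    ∫ t in (0 : ℝ)..x, cexp (c * (x - t)) * cexp (t * z)
      = (cexp (x * z) - cexp (c * x)) / (z - c) := by
  have hzc' : z - c ≠ 0 := sub_ne_zero.2 hzc
  calc ∫ t in (0 : ℝ)..x, cexp (c * (x - t)) * cexp (t * z)
      = ∫ t in (0 : ℝ)..x, cexp (c * x) * cexp ((z - c) * t) := by
        congr 1 with t
        rw [← Complex.exp_add, ← Complex.exp_add]
        ring_nf
    _ = (cexp (x * z) - cexp (c * x)) / (z - c) := by
        rw [intervalIntegral.integral_const_mul, integral_exp_mul_complex hzc', ofReal_zero,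
          mul_zero, Complex.exp_zero, mul_div_assoc', mul_sub, mul_one, ← Complex.exp_add]
        ring_nf

lemma circleIntegral_exp_div_sub {r : ℝ} {c : ℂ} (hc : c ∈ ball (0 : ℂ) r) (x : ℝ) :
    (∮ z in C(0, r), cexp (x * z) / (z - c)) = 2 * π * I * cexp (c * x) := by
  simpa [div_eq_inv_mul, mul_comm] using
    (show Differentiable ℂ fun z : ℂ => cexp (x * z) by fun_prop).differentiableOn
      |>.circleIntegral_sub_inv_smul (c := 0) (R := r) hc

lemma circleIntegral_exp_div_mul_sub {r : ℝ} (hr : 0 ≤ r) {Q : ℂ → ℂ}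
    (hQc : ContinuousOn Q (sphere 0 r)) (hQ : ∀ z ∈ sphere (0 : ℂ) r, Q z ≠ 0) {c : ℂ}
    (hc : c ∉ sphere (0 : ℂ) r) (h0 : (∮ z in C(0, r), (Q z * (z - c))⁻¹) = 0) (x : ℝ) :
    (∮ z in C(0, r), cexp (x * z) / (Q z * (z - c)))
      = ∫ t in (0 : ℝ)..x, cexp (c * (x - t)) * ∮ z in C(0, r), cexp (t * z) / Q z := by
  have hne : ∀ z ∈ sphere (0 : ℂ) r, Q z * (z - c) ≠ 0 := fun z hz =>
    mul_ne_zero (hQ z hz) (sub_ne_zero.2 (ne_of_mem_of_not_mem hz hc))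
  have hcont : ContinuousOn (fun z => Q z * (z - c)) (sphere 0 r) := hQc.mul (by fun_prop)
  have hsub : ∀ z ∈ sphere (0 : ℂ) r,
      cexp (x * z) / (Q z * (z - c)) - cexp (c * x) * (Q z * (z - c))⁻¹
        = ∫ t in (0 : ℝ)..x, cexp (c * (x - t)) * (cexp (t * z) / Q z) := by
    intro z hz
    simp_rw [← mul_div_assoc, intervalIntegral.integral_div,
      integral_exp_mul_sub_mul_exp (ne_of_mem_of_not_mem hz hc)]
    field_simp [hne z hz, hQ z hz, sub_ne_zero.2 (ne_of_mem_of_not_mem hz hc)]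
  have hF : ContinuousOn (Function.uncurry fun (t : ℝ) (z : ℂ) =>
      cexp (c * (x - t)) * (cexp (t * z) / Q z)) (univ ×ˢ sphere 0 r) :=
    (by fun_prop : Continuous fun p : ℝ × ℂ => cexp (c * (x - p.1))).continuousOn.mul
      ((by fun_prop : Continuous fun p : ℝ × ℂ => cexp (p.1 * p.2)).continuousOn.div
        (hQc.comp continuousOn_snd fun p hp => hp.2) fun p hp => hQ p.2 hp.2)
  have hint : CircleIntegrable (fun z => cexp (x * z) / (Q z * (z - c))) 0 r :=
    (ContinuousOn.div (by fun_prop) hcont hne).circleIntegrable hr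
  have hint' : CircleIntegrable (fun z => cexp (c * x) * (Q z * (z - c))⁻¹) 0 r :=
    (continuousOn_const.mul (hcont.inv₀ hne)).circleIntegrable hr
  calc (∮ z in C(0, r), cexp (x * z) / (Q z * (z - c)))
      = ∮ z in C(0, r),
          (cexp (x * z) / (Q z * (z - c)) - cexp (c * x) * (Q z * (z - c))⁻¹) := by
        rw [circleIntegral.integral_sub hint hint', circleIntegral.integral_const_mul, h0,
          mul_zero, sub_zero]
    _ = ∮ z in C(0, r), ∫ t in (0 : ℝ)..x, cexp (c * (x - t)) * (cexp (t * z) / Q z) :=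
        circleIntegral.integral_congr hr hsub
    _ = ∫ t in (0 : ℝ)..x, ∮ z in C(0, r), cexp (c * (x - t)) * (cexp (t * z) / Q z) :=
        circleIntegral_intervalIntegral_swap hr hF 0 x
    _ = ∫ t in (0 : ℝ)..x, cexp (c * (x - t)) * ∮ z in C(0, r), cexp (t * z) / Q z := by
        simp_rw [circleIntegral.integral_const_mul]

noncomputable def fundamentalFunction : (n : ℕ) → (Fin (n + 1) → ℝ) → ℝ → ℝ
  | 0, lam => fun x => rexp (lam 0 * x)
  | n + 1, lam => expConvolution (lam (Fin.last _)) (fundamentalFunction n (Fin.init lam))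

lemma continuous_fundamentalFunction (n : ℕ) (lam : Fin (n + 1) → ℝ) :
    Continuous (fundamentalFunction n lam) := by
  induction n with
  | zero => exact (by fun_prop : Continuous fun x => rexp (lam 0 * x))
  | succ n ih => exact continuous_expConvolution (ih _)

lemma fundamentalFunction_pos (n : ℕ) (lam : Fin (n + 1) → ℝ) {x : ℝ} (hx : 0 < x) :
    0 < fundamentalFunction n lam x := by
  induction n generalizing x with
  | zero => exact exp_pos _
  | succ n ih =>
    exact expConvolution_pos (continuous_fundamentalFunction n _) (fun t ht => ih _ ht) hx

lemma circleIntegral_exp_div_prod_sub (n : ℕ) (lam : Fin (n + 1) → ℝ) {r : ℝ}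
    (hr : ∀ j, |lam j| < r) (x : ℝ) :
    (∮ z in C(0, r), cexp (x * z) / ∏ j, (z - lam j))
      = 2 * π * I * fundamentalFunction n lam x := by
  have hlam : ∀ j, ‖(lam j : ℂ)‖ < r := fun j => by simpa using hr j
  induction n generalizing x with
  | zero =>
    simpa [fundamentalFunction, mul_comm] using
      circleIntegral_exp_div_sub (mem_ball_zero_iff.2 (hlam 0)) x
  | succ n ih =>
    have hr0 : 0 ≤ r := (abs_nonneg _).trans (hr 0).le
    have hlast : (lam (Fin.last _) : ℂ) ∉ sphere (0 : ℂ) r := by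
      simpa using (hlam (Fin.last _)).ne
    have h0 := circleIntegral_inv_prod_sub_eq_zero hlam (by simp)
    have hinit : ∀ t : ℝ, (∮ z in C(0, r), cexp (t * z) / ∏ j, (z - lam (Fin.castSucc j)))
        = 2 * π * I * fundamentalFunction n (Fin.init lam) t :=
      fun t => ih (Fin.init lam) (fun j => hr _) t fun j => hlam _
    simp only [Fin.prod_univ_castSucc (n := n + 1)] at h0 ⊢
    have hinit_ne : ∀ z ∈ sphere (0 : ℂ) r, ∏ j, (z - lam (Fin.castSucc j)) ≠ 0 := fun z hz =>
      prod_sub_ne_zero_of_le_norm (fun j => hlam _) (mem_sphere_zero_iff_norm.1 hz).ge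
    rw [circleIntegral_exp_div_mul_sub hr0 (by fun_prop) hinit_ne hlast h0]
    simp_rw [hinit]
    simp only [fundamentalFunction, expConvolution, ← intervalIntegral.integral_ofReal,
      ← intervalIntegral.integral_const_mul]
    congr 1 with t
    push_cast
    ring

/-- For real eigenvalues the fundamental function is strictly positive on `(0, ∞)`. -/
theorem stmt_3 (n : ℕ) (lam : Fin (n + 1) → ℝ) (r : ℝ)
    (hr : ∀ j, |lam j| < r)
    (Φ : ℂ → ℂ)
    (hΦ : ∀ x, Φ x = (2 * Real.pi * Complex.I)⁻¹ *
      ∮ z in C(0, r), Complex.exp (x * z) / ∏ j, (z - (lam j : ℂ))) :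
    ∀ x : ℝ, 0 < x → 0 < (Φ x).re ∧ (Φ x).im = 0 := by
  intro x hx
  rw [hΦ, circleIntegral_exp_div_prod_sub n lam hr x, inv_mul_cancel_left₀ two_pi_I_ne_zero]
  exact ⟨by simpa using fundamentalFunction_pos n lam hx, ofReal_im _⟩
end

section
/- The polynomials P_s⁰ satisfy the three-term recurrence 4s(s+1) P_{s+1}⁰(x) = x² P_{s-1}⁰(x) − 2s(2s+1) P_s⁰(x) for s ≥ 1. -/
/-!
With `u = z (z + 2)` and `q = -2s - 2(x + s)z - xz²` one has
`(xq + q')u - (s + 1)u'q = 4s(s + 1) + 2s(2s + 1)u - x²u²`, so the combination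
`4s(s + 1) e^{xz}/u^{s+2} + 2s(2s + 1) e^{xz}/u^{s+1} - x² e^{xz}/u^s` is the derivative of
`e^{xz} q / u^{s+1}`, which is holomorphic near the unit circle. Its integral over the circle
therefore vanishes, and dividing by `2πi` gives the recurrence.
-/

open Complex Metric

noncomputable def expKernel (n : ℕ) (x z : ℂ) : ℂ := exp (x * z) / (z ^ n * (z + 2) ^ n)

lemma pow_mul_add_two_pow_ne_zero_of_mem_sphere {z : ℂ} (hz : z ∈ sphere (0 : ℂ) 1) (n : ℕ) :
    z ^ n * (z + 2) ^ n ≠ 0 := by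
  rw [mem_sphere_zero_iff_norm] at hz
  have hz0 : z ≠ 0 := by rintro rfl; simp at hz
  have hz2 : z + 2 ≠ 0 := by
    intro h; rw [eq_neg_of_add_eq_zero_left h] at hz; norm_num at hz
  exact mul_ne_zero (pow_ne_zero n hz0) (pow_ne_zero n hz2)

lemma circleIntegrable_expKernel (n : ℕ) (x : ℂ) : CircleIntegrable (expKernel n x) 0 1 :=
  ContinuousOn.circleIntegrable zero_le_one (ContinuousOn.div (by fun_prop) (by fun_prop)
    fun _ hz => pow_mul_add_two_pow_ne_zero_of_mem_sphere hz n)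

lemma hasDerivAt_expKernel_primitive (s : ℕ) (x : ℂ) {z : ℂ}
    (hz : z ^ (s + 1) * (z + 2) ^ (s + 1) ≠ 0) :
    HasDerivAt (fun w => exp (x * w) * (-2 * s - 2 * (x + s) * w - x * w ^ 2) /
        (w ^ (s + 1) * (w + 2) ^ (s + 1)))
      (4 * s * (s + 1) * expKernel (s + 2) x z + 2 * s * (2 * s + 1) * expKernel (s + 1) x z
        - x ^ 2 * expKernel s x z) z := by
  have hz0 : z ≠ 0 := by rintro rfl; simp at hz
  have hz2 : z + 2 ≠ 0 := by rintro h; simp [h] at hz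
  have hexp : HasDerivAt (fun w => exp (x * w)) (exp (x * z) * x) z := by
    simpa using ((hasDerivAt_id z).const_mul x).cexp
  have hq : HasDerivAt (fun w : ℂ => -2 * s - 2 * (x + s) * w - x * w ^ 2)
      (-2 * (x + s) - x * (2 * z)) z :=
    (((hasDerivAt_const z (-2 * (s : ℂ))).sub ((hasDerivAt_id z).const_mul (2 * (x + s)))).sub
      ((hasDerivAt_pow 2 z).const_mul x)).congr_deriv (by simp)
  have hden : HasDerivAt (fun w : ℂ => w ^ (s + 1) * (w + 2) ^ (s + 1))
      ((s + 1) * z ^ s * (z + 2) ^ (s + 1) + z ^ (s + 1) * ((s + 1) * (z + 2) ^ s)) z :=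
    ((hasDerivAt_pow (s + 1) z).mul (((hasDerivAt_id z).add_const 2).pow (s + 1))).congr_deriv
      (by simp)
  refine ((hexp.mul hq).div hden hz).congr_deriv ?_
  simp only [expKernel, Pi.mul_apply]
  field_simp
  ring

lemma circleIntegral_expKernel_recurrence (s : ℕ) (x : ℂ) :
    4 * s * (s + 1) * (∮ z in C(0, 1), expKernel (s + 2) x z)
      + 2 * s * (2 * s + 1) * (∮ z in C(0, 1), expKernel (s + 1) x z)
      = x ^ 2 * ∮ z in C(0, 1), expKernel s x z := by
  have hint (n : ℕ) (a : ℂ) : CircleIntegrable (fun z => a * expKernel n x z) 0 1 :=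
    (circleIntegrable_expKernel n x).const_smul (a := a)
  rw [← sub_eq_zero]
  simp only [← circleIntegral.integral_const_mul]
  rw [← circleIntegral.integral_add (hint _ _) (hint _ _),
    ← circleIntegral.integral_sub (f := fun z => _ + _) ((hint _ _).add (hint _ _)) (hint _ _)]
  exact circleIntegral.integral_eq_zero_of_hasDerivWithinAt zero_le_one fun z hz =>
    (hasDerivAt_expKernel_primitive s x
      (pow_mul_add_two_pow_ne_zero_of_mem_sphere hz (s + 1))).hasDerivWithinAt

theorem stmt_9 (P : ℕ → ℂ → ℂ)
    (hP : ∀ s x, P s x = (2 * Real.pi * Complex.I)⁻¹ *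
      ∮ z in C(0, 1), Complex.exp (x * z) / (z ^ (s + 1) * (z + 2) ^ (s + 1))) :
    ∀ s : ℕ, 1 ≤ s → ∀ x : ℂ,
      4 * (s : ℂ) * ((s : ℂ) + 1) * P (s + 1) x =
        x ^ 2 * P (s - 1) x - 2 * (s : ℂ) * (2 * (s : ℂ) + 1) * P s x := by
  intro s hs x
  have hrec := circleIntegral_expKernel_recurrence s x
  simp only [expKernel] at hrec
  rw [hP, hP, hP, Nat.sub_add_cancel hs]
  linear_combination (2 * (Real.pi : ℂ) * Complex.I)⁻¹ * hrec
end

section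
/- The fundamental functions Φ_{2s+1} satisfy the recursion Φ_{2s+3}(x) = x²/(4s(s+1)) · Φ_{2s-1}(x) − (2s+1)/(2s+2) · Φ_{2s+1}(x) for s ≥ 1. -/
/-!
Write `E(z) = exp (x z)`, `q(z) = z² - 1` and `A m = ∮ E / q ^ m` over the circle, so that
`Φ s = A (s + 1) / (2πi)`. Since `E' = x E` and `q' = 2z`, the exact derivative
`(z ^ j E / q ^ m)' = j z ^ (j - 1) E / q ^ m + x z ^ j E / q ^ m - 2m z ^ (j + 1) E / q ^ (m + 1)`
integrates to zero around the circle. For `j = 0` this expresses `∮ z E / q ^ (m + 1)` through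
`A m`; for `j = 1`, after `z² = q + 1`, it relates `A m`, `A (m + 1)` and `∮ z E / q ^ m`.
Eliminating the moment `∮ z E / q ^ (s + 1)` gives the three-term recursion.
-/

open Metric

section CircleIntegralExpDivSqSubOnePow

variable {x c : ℂ} {R : ℝ}

lemma circleIntegrable_pow_mul_exp_div_sq_sub_one_pow (hR : 0 ≤ R)
    (hq : ∀ z ∈ sphere c R, z ^ 2 - 1 ≠ 0) (j m : ℕ) :
    CircleIntegrable (fun z => z ^ j * Complex.exp (x * z) / (z ^ 2 - 1) ^ m) c R :=
  (ContinuousOn.div (by fun_prop) (by fun_prop) fun z hz =>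
    pow_ne_zero _ (hq z hz)).circleIntegrable hR

lemma hasDerivAt_pow_mul_exp_div_sq_sub_one_pow {z : ℂ} (hz : z ^ 2 - 1 ≠ 0) (j m : ℕ) :
    HasDerivAt (fun w => w ^ j * Complex.exp (x * w) / (w ^ 2 - 1) ^ m)
      (j * (z ^ (j - 1) * Complex.exp (x * z) / (z ^ 2 - 1) ^ m)
        + x * (z ^ j * Complex.exp (x * z) / (z ^ 2 - 1) ^ m)
        - 2 * m * (z ^ (j + 1) * Complex.exp (x * z) / (z ^ 2 - 1) ^ (m + 1))) z := by
  have hexp : HasDerivAt (fun w => Complex.exp (x * w)) (Complex.exp (x * z) * x) z := by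
    simpa using ((hasDerivAt_id z).const_mul x).cexp
  have hq := ((hasDerivAt_pow 2 z).sub_const 1).fun_pow m
  refine (((hasDerivAt_pow j z).fun_mul hexp).fun_div hq (pow_ne_zero m hz)).congr_deriv ?_
  rcases m with _ | m
  · simp only [pow_zero, CharP.cast_eq_zero]
    ring
  rw [Nat.add_sub_cancel]
  field_simp
  ring

lemma circleIntegral_pow_mul_exp_div_sq_sub_one_pow (hR : 0 ≤ R)
    (hq : ∀ z ∈ sphere c R, z ^ 2 - 1 ≠ 0) (j m : ℕ) :
    j * (∮ z in C(c, R), z ^ (j - 1) * Complex.exp (x * z) / (z ^ 2 - 1) ^ m)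
      + x * (∮ z in C(c, R), z ^ j * Complex.exp (x * z) / (z ^ 2 - 1) ^ m) =
      2 * m * ∮ z in C(c, R), z ^ (j + 1) * Complex.exp (x * z) / (z ^ 2 - 1) ^ (m + 1) := by
  have hint := circleIntegrable_pow_mul_exp_div_sq_sub_one_pow (x := x) hR hq
  have hzero := circleIntegral.integral_eq_zero_of_hasDerivWithinAt hR fun z hz =>
    (hasDerivAt_pow_mul_exp_div_sq_sub_one_pow (x := x) (hq z hz) j m).hasDerivWithinAt
  have := hint (j - 1) m
  have := hint j m
  have := hint (j + 1) (m + 1)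
  rw [circleIntegral.integral_sub (by fun_prop) (by fun_prop),
    circleIntegral.integral_add (by fun_prop) (by fun_prop)] at hzero
  simp only [circleIntegral.integral_const_mul] at hzero
  exact sub_eq_zero.mp hzero

lemma circleIntegral_exp_div_sq_sub_one_pow_recursion (hR : 0 ≤ R)
    (hq : ∀ z ∈ sphere c R, z ^ 2 - 1 ≠ 0) {s : ℕ} (hs : s ≠ 0) :
    (∮ z in C(c, R), Complex.exp (x * z) / (z ^ 2 - 1) ^ (s + 2)) =
      x ^ 2 / (4 * s * (s + 1)) * (∮ z in C(c, R), Complex.exp (x * z) / (z ^ 2 - 1) ^ s) -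
        (2 * s + 1) / (2 * s + 2) *
          ∮ z in C(c, R), Complex.exp (x * z) / (z ^ 2 - 1) ^ (s + 1) := by
  have hfirst := circleIntegral_pow_mul_exp_div_sq_sub_one_pow (x := x) hR hq 0 s
  have hsecond := circleIntegral_pow_mul_exp_div_sq_sub_one_pow (x := x) hR hq 1 (s + 1)
  have hsplit : (∮ z in C(c, R), z ^ 2 * Complex.exp (x * z) / (z ^ 2 - 1) ^ (s + 2)) =
      (∮ z in C(c, R), Complex.exp (x * z) / (z ^ 2 - 1) ^ (s + 1)) +
        ∮ z in C(c, R), Complex.exp (x * z) / (z ^ 2 - 1) ^ (s + 2) := by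
    have hint := circleIntegrable_pow_mul_exp_div_sq_sub_one_pow (x := x) hR hq 0
    simp only [pow_zero, one_mul] at hint
    rw [← circleIntegral.integral_add (hint _) (hint _)]
    refine circleIntegral.integral_congr hR fun z hz => ?_
    field_simp [hq z hz]
    ring
  simp only [pow_zero, one_mul, Nat.cast_zero, zero_mul, zero_add, pow_one, Nat.cast_one,
    Nat.sub_self, Nat.cast_add, hsplit] at hfirst hsecond
  have hcleared : 4 * s * (s + 1) *
      (∮ z in C(c, R), Complex.exp (x * z) / (z ^ 2 - 1) ^ (s + 2)) =
      x ^ 2 * (∮ z in C(c, R), Complex.exp (x * z) / (z ^ 2 - 1) ^ s) - 2 * s * (2 * s + 1) *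
        ∮ z in C(c, R), Complex.exp (x * z) / (z ^ 2 - 1) ^ (s + 1) := by
    linear_combination -x * hfirst - 2 * s * hsecond
  have hs' : (s : ℂ) ≠ 0 := Nat.cast_ne_zero.mpr hs
  have hs1 : (s : ℂ) + 1 ≠ 0 := by exact_mod_cast s.succ_ne_zero
  field_simp
  linear_combination 2 * hcleared

end CircleIntegralExpDivSqSubOnePow

lemma sq_sub_one_ne_zero_of_norm_ne_one {z : ℂ} (hz : ‖z‖ ≠ 1) : z ^ 2 - 1 ≠ 0 := by
  intro h
  apply hz
  have : ‖z‖ ^ 2 = 1 := by rw [← norm_pow, sub_eq_zero.mp h, norm_one]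
  nlinarith [norm_nonneg z]

theorem stmt_10 (r : ℝ) (hr : 1 < r) (Φ : ℕ → ℂ → ℂ)
    (hΦ : ∀ s x, Φ s x = (2 * Real.pi * Complex.I)⁻¹ *
      ∮ z in C(0, r), Complex.exp (x * z) / ((z - 1) ^ (s + 1) * (z + 1) ^ (s + 1))) :
    ∀ s : ℕ, 1 ≤ s → ∀ x : ℂ,
      Φ (s + 1) x = x ^ 2 / (4 * (s : ℂ) * ((s : ℂ) + 1)) * Φ (s - 1) x -
        (2 * (s : ℂ) + 1) / (2 * (s : ℂ) + 2) * Φ s x := by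
  intro s hs x
  have hq : ∀ z ∈ sphere (0 : ℂ) r, z ^ 2 - 1 ≠ 0 := fun z hz =>
    sq_sub_one_ne_zero_of_norm_ne_one (by rw [mem_sphere_zero_iff_norm.mp hz]; exact hr.ne')
  have hfactor (k : ℕ) (z : ℂ) : (z - 1) ^ k * (z + 1) ^ k = (z ^ 2 - 1) ^ k := by
    rw [← mul_pow]; ring
  simp only [hΦ, hfactor, Nat.sub_add_cancel hs, add_assoc, one_add_one_eq_two,
    circleIntegral_exp_div_sq_sub_one_pow_recursion (x := x) (by linarith) hq
      (Nat.one_le_iff_ne_zero.mp hs)]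
  ring
end

section
/- The derivative of P_s⁰ satisfies (d/dx)P_s⁰(x) = (x/(2s)) P_{s-1}⁰(x) − P_s⁰(x) for s ≥ 1. -/
/-! Differentiating under the integral sign, `d/dx P_s` is the same contour integral with an extra
factor `z` in the integrand. The derivative of `e^{xz} (z(z+2))^{-s}` integrates to zero around the
circle, so `x ∮ e^{xz} / (z(z+2))^s = 2s ∮ (z + 1) e^{xz} / (z(z+2))^{s+1}`; splitting the factor
`z + 1` gives the recurrence. -/

open Complex Metric

theorem hasDerivAt_circleIntegral_exp_mul {c : ℂ} {R : ℝ} {f : ℂ → ℂ}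
    (hf : ContinuousOn f (sphere c |R|)) (x₀ : ℂ) :
    HasDerivAt (fun x => ∮ z in C(c, R), exp (x * z) * f z)
      (∮ z in C(c, R), z * exp (x₀ * z) * f z) x₀ := by
  obtain ⟨g, hg, hfg⟩ : ∃ g : ℝ → ℂ, Continuous g ∧ ∀ θ, f (circleMap c R θ) = g θ :=
    ⟨_, hf.comp_continuous (continuous_circleMap c R) (circleMap_mem_sphere' c R), fun _ => rfl⟩
  simp only [circleIntegral, deriv_circleMap, smul_eq_mul, hfg]
  have hγ₀ : Continuous (circleMap 0 R) := continuous_circleMap 0 R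
  have hγ : Continuous (circleMap c R) := continuous_circleMap c R
  set F' : ℂ → ℝ → ℂ := fun x θ =>
    circleMap 0 R θ * I * (circleMap c R θ * exp (x * circleMap c R θ) * g θ)
  have hF' : Continuous fun p : ℂ × ℝ => F' p.1 p.2 := by fun_prop
  obtain ⟨B, hB⟩ := ((isCompact_closedBall x₀ 1).prod
    (isCompact_uIcc (a := 0) (b := 2 * Real.pi))).exists_bound_of_continuousOn hF'.continuousOn
  refine (intervalIntegral.hasDerivAt_integral_of_dominated_loc_of_deriv_le (F' := F')
    (bound := fun _ => B) (closedBall_mem_nhds x₀ one_pos)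
    (.of_forall fun x => ?_) ?_ (by fun_prop : Continuous (F' x₀)).aestronglyMeasurable
    (.of_forall fun θ hθ x hx => hB (x, θ) ⟨hx, Set.uIoc_subset_uIcc hθ⟩)
    intervalIntegrable_const (.of_forall fun θ _ x _ => ?_)).2
  · exact (by fun_prop : Continuous fun θ => circleMap 0 R θ * I *
      (exp (x * circleMap c R θ) * g θ)).aestronglyMeasurable
  · exact (by fun_prop : Continuous fun θ => circleMap 0 R θ * I *
      (exp (x₀ * circleMap c R θ) * g θ)).intervalIntegrable _ _
  · refine ((((hasDerivAt_id x).mul_const (circleMap c R θ)).cexp.mul_const (g θ)).const_mul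
      (circleMap 0 R θ * I)).congr_deriv ?_
    simp only [F', id, one_mul]; ring

theorem mul_circleIntegral_exp_mul_inv_pow {c : ℂ} {R : ℝ} {q q' : ℂ → ℂ}
    (hq : ∀ z ∈ sphere c |R|, HasDerivAt q (q' z) z) (hq₀ : ∀ z ∈ sphere c |R|, q z ≠ 0)
    (hq' : ContinuousOn q' (sphere c |R|)) (x : ℂ) (n : ℕ) :
    x * ∮ z in C(c, R), exp (x * z) * (q z ^ (n + 1))⁻¹ =
      (n + 1) * ∮ z in C(c, R), q' z * exp (x * z) * (q z ^ (n + 2))⁻¹ := by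
  have hq_cont : ContinuousOn q (sphere c |R|) := fun z hz =>
    (hq z hz).continuousAt.continuousWithinAt
  have hexp : Continuous fun z : ℂ => exp (x * z) := by fun_prop
  have hderiv : ∀ z ∈ sphere c |R|, HasDerivAt (fun z => exp (x * z) * (q z ^ (n + 1))⁻¹)
      (x * (exp (x * z) * (q z ^ (n + 1))⁻¹) -
        (n + 1) * (q' z * exp (x * z) * (q z ^ (n + 2))⁻¹)) z := by
    intro z hz
    have hq₀z := hq₀ z hz
    refine (((hasDerivAt_id z).const_mul x).cexp.fun_mul
      (((hq z hz).fun_pow (n + 1)).fun_inv (pow_ne_zero _ hq₀z))).congr_deriv ?_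
    simp only [id]
    field_simp
    push_cast
    ring
  have hint : ∀ m : ℕ, ContinuousOn (fun z => (q z ^ m)⁻¹) (sphere c |R|) := fun m =>
    (hq_cont.pow m).inv₀ fun z hz => pow_ne_zero _ (hq₀ z hz)
  have h₁ : CircleIntegrable (fun z => x * (exp (x * z) * (q z ^ (n + 1))⁻¹)) c R :=
    (continuousOn_const.mul (hexp.continuousOn.mul (hint _))).circleIntegrable'
  have h₂ : CircleIntegrable
      (fun z => (n + 1 : ℂ) * (q' z * exp (x * z) * (q z ^ (n + 2))⁻¹)) c R :=
    (continuousOn_const.mul ((hq'.mul hexp.continuousOn).mul (hint _))).circleIntegrable'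
  have h := circleIntegral.integral_eq_zero_of_hasDerivWithinAt' fun z hz =>
    (hderiv z hz).hasDerivWithinAt
  rwa [circleIntegral.integral_sub h₁ h₂, circleIntegral.integral_const_mul,
    circleIntegral.integral_const_mul, sub_eq_zero] at h

theorem mul_add_two_ne_zero_of_mem_sphere {z : ℂ} (hz : z ∈ sphere (0 : ℂ) |1|) :
    z * (z + 2) ≠ 0 := by
  rw [abs_one, mem_sphere_zero_iff_norm] at hz
  refine mul_ne_zero (by rintro rfl; simp at hz) fun h => ?_
  rw [eq_neg_of_add_eq_zero_left h] at hz
  norm_num at hz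

theorem continuousOn_inv_mul_add_two_pow (m : ℕ) :
    ContinuousOn (fun z : ℂ => ((z * (z + 2)) ^ m)⁻¹) (sphere 0 |1|) :=
  (by fun_prop : Continuous fun z : ℂ => (z * (z + 2)) ^ m).continuousOn.inv₀
    fun _ hz => pow_ne_zero _ (mul_add_two_ne_zero_of_mem_sphere hz)

theorem circleIntegral_mul_exp_mul_inv_pow (x : ℂ) (n : ℕ) :
    (∮ z in C(0, 1), z * exp (x * z) * ((z * (z + 2)) ^ (n + 2))⁻¹) =
      x / (2 * (n + 1)) * (∮ z in C(0, 1), exp (x * z) * ((z * (z + 2)) ^ (n + 1))⁻¹) -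
        ∮ z in C(0, 1), exp (x * z) * ((z * (z + 2)) ^ (n + 2))⁻¹ := by
  have hexp : ContinuousOn (fun z : ℂ => exp (x * z)) (sphere 0 |1|) := by fun_prop
  have hibp := mul_circleIntegral_exp_mul_inv_pow (q := fun z => z * (z + 2))
    (q' := fun z => 2 * z + 2)
    (fun z _ => ((hasDerivAt_id z).mul ((hasDerivAt_id z).add_const 2)).congr_deriv (by simp; ring))
    (fun _ => mul_add_two_ne_zero_of_mem_sphere) (by fun_prop) x n
  have hsplit : (∮ z in C(0, 1), (2 * z + 2) * exp (x * z) * ((z * (z + 2)) ^ (n + 2))⁻¹) =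
      2 * (∮ z in C(0, 1), z * exp (x * z) * ((z * (z + 2)) ^ (n + 2))⁻¹) +
        2 * ∮ z in C(0, 1), exp (x * z) * ((z * (z + 2)) ^ (n + 2))⁻¹ := by
    have hinv := continuousOn_inv_mul_add_two_pow (n + 2)
    have h₁ : CircleIntegrable
        (fun z => 2 * (z * exp (x * z) * ((z * (z + 2)) ^ (n + 2))⁻¹)) 0 1 :=
      (continuousOn_const.mul ((continuousOn_id.mul hexp).mul hinv)).circleIntegrable'
    have h₂ : CircleIntegrable
        (fun z => 2 * (exp (x * z) * ((z * (z + 2)) ^ (n + 2))⁻¹)) 0 1 :=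
      (continuousOn_const.mul (hexp.mul hinv)).circleIntegrable'
    rw [← circleIntegral.integral_const_mul, ← circleIntegral.integral_const_mul,
      ← circleIntegral.integral_add h₁ h₂]
    congr 1
    funext z
    ring
  rw [hsplit] at hibp
  have hn : (n + 1 : ℂ) ≠ 0 := Nat.cast_add_one_ne_zero n
  rw [eq_sub_iff_add_eq, div_mul_eq_mul_div, eq_div_iff (mul_ne_zero two_ne_zero hn)]
  linear_combination -hibp

theorem stmt_12 (P : ℕ → ℂ → ℂ)
    (hP : ∀ s x, P s x = (2 * Real.pi * Complex.I)⁻¹ *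
      ∮ z in C(0, 1), Complex.exp (x * z) / (z ^ (s + 1) * (z + 2) ^ (s + 1))) :
    ∀ s : ℕ, 1 ≤ s → ∀ x : ℂ,
      deriv (P s) x = x / (2 * (s : ℂ)) * P (s - 1) x - P s x := by
  intro s hs x
  obtain ⟨k, rfl⟩ := Nat.exists_eq_add_of_le' hs
  have hP' : ∀ n, P n = fun y => (2 * Real.pi * I)⁻¹ *
      ∮ z in C(0, 1), exp (y * z) * ((z * (z + 2)) ^ (n + 1))⁻¹ := fun n => by
    funext y
    simp only [hP, div_eq_mul_inv, mul_pow]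
  rw [hP' (k + 1), ((hasDerivAt_circleIntegral_exp_mul
    (continuousOn_inv_mul_add_two_pow (k + 2)) x).const_mul _).deriv,
    circleIntegral_mul_exp_mul_inv_pow, Nat.add_sub_cancel, hP' k]
  push_cast
  ring
end

section
/- For integer α and |y| < 1, the generating function Σ_{n=0}^∞ P_n^α(x) yⁿ equals e^{-x} · e^{x√(y+1)} / (2√(y+1)(√(y+1)+1)^α). -/
/-!
Expanding `P_n^α(x) yⁿ` under the integral sign, the generating function is the circle integral
of `e^{xz} (z+2)^{-α}` against the geometric series `Σ (y / (z(z+2)))ⁿ / (z(z+2))`, which sums to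
`1 / (z(z+2) - y)`. With `s = √(y+1)` the denominator factors as `(z - (s-1)) (z + s + 1)`;
only the root `s - 1` lies inside the unit circle, so Cauchy's integral formula evaluates the
integral at `z = s - 1`.
-/

open Complex Metric

lemma re_add_one_pos_of_norm_lt_one {y : ℂ} (hy : ‖y‖ < 1) : 0 < (y + 1).re := by
  simp only [add_re, one_re]
  linarith [neg_abs_le y.re, abs_re_le_norm y]

lemma re_cpow_one_half_pos {w : ℂ} (hw : 0 < w.re) : 0 < (w ^ (1 / 2 : ℂ)).re := by
  rw [one_div, cpow_inv_two_re]
  exact Real.sqrt_pos.2 (half_pos (by linarith [re_le_norm w]))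

lemma one_le_norm_add_two {z : ℂ} (hz : ‖z‖ ≤ 1) : 1 ≤ ‖z + 2‖ := by
  have h := norm_sub_le (z + 2) z
  rw [add_sub_cancel_left, Complex.norm_two] at h
  linarith

theorem circleIntegral.hasSum_integral_mul_pow {g q : ℂ → ℂ} {c : ℂ} {R r : ℝ} (hR : 0 ≤ R)
    (hg : ContinuousOn g (sphere c R)) (hq : ContinuousOn q (sphere c R))
    (hqr : ∀ z ∈ sphere c R, ‖q z‖ ≤ r) (hr : r < 1) :
    HasSum (fun n : ℕ => ∮ z in C(c, R), g z * q z ^ n)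
      (∮ z in C(c, R), g z * (1 - q z)⁻¹) := by
  have hr₀ : 0 ≤ r := (norm_nonneg _).trans (hqr _ (circleMap_mem_sphere c hR 0))
  have hG : Continuous fun θ => deriv (circleMap c R) θ • g (circleMap c R θ) := by
    simp only [deriv_circleMap, smul_eq_mul]
    exact (continuous_circleMap 0 R |>.mul continuous_const).mul
      (hg.comp_continuous (continuous_circleMap c R) (circleMap_mem_sphere c hR))
  have hQ : Continuous fun θ => q (circleMap c R θ) :=
    hq.comp_continuous (continuous_circleMap c R) (circleMap_mem_sphere c hR)
  refine intervalIntegral.hasSum_integral_of_dominated_convergence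
    (fun n θ => ‖deriv (circleMap c R) θ • g (circleMap c R θ)‖ * r ^ n)
    (fun n => ?_) (fun n => ?_) ?_ ?_ ?_
  · refine Continuous.aestronglyMeasurable ?_
    simp only [smul_eq_mul, ← mul_assoc] at hG ⊢
    exact hG.mul (hQ.pow n)
  · refine Filter.Eventually.of_forall fun θ _ => ?_
    rw [smul_eq_mul, smul_eq_mul, ← mul_assoc, norm_mul, norm_pow]
    gcongr
    exact hqr _ (circleMap_mem_sphere c hR θ)
  · exact Filter.Eventually.of_forall fun θ _ => (summable_geometric_of_lt_one hr₀ hr).mul_left _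
  · simp only [tsum_mul_left, tsum_geometric_of_lt_one hr₀ hr]
    exact (hG.norm.mul continuous_const).intervalIntegrable _ _
  · refine Filter.Eventually.of_forall fun θ _ => ?_
    have hq1 : ‖q (circleMap c R θ)‖ < 1 := (hqr _ (circleMap_mem_sphere c hR θ)).trans_lt hr
    simpa only [smul_eq_mul, mul_assoc] using (hasSum_geometric_of_norm_lt_one hq1).mul_left
      (deriv (circleMap c R) θ * g (circleMap c R θ))

theorem hasSum_circleIntegral_exp_div_mul_pow (x y : ℂ) (α : ℤ) (hy : ‖y‖ < 1) :
    HasSum (fun n : ℕ => (∮ z in C(0, 1),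
        exp (x * z) / (z ^ (n + 1) * (z + 2) ^ ((n : ℤ) + 1 + α))) * y ^ n)
      (∮ z in C(0, 1), exp (x * z) / ((z + 2) ^ α * (z * (z + 2) - y))) := by
  have h_sphere : ∀ z ∈ sphere (0 : ℂ) 1, z ≠ 0 ∧ z + 2 ≠ 0 ∧ 1 ≤ ‖z + 2‖ := fun z hz => by
    rw [mem_sphere_zero_iff_norm] at hz
    have h2 := one_le_norm_add_two hz.le
    exact ⟨norm_ne_zero_iff.1 (by simp [hz]), norm_ne_zero_iff.1 (by linarith), h2⟩
  have hsum := circleIntegral.hasSum_integral_mul_pow (r := ‖y‖) zero_le_one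
    (g := fun z => exp (x * z) / (z * (z + 2) ^ (1 + α))) (q := fun z => y / (z * (z + 2)))
    (ContinuousOn.div (by fun_prop)
      (continuousOn_id.mul ((continuousOn_id.add continuousOn_const).zpow₀ _
        fun z hz => Or.inl (h_sphere z hz).2.1))
      fun z hz => mul_ne_zero (h_sphere z hz).1 (zpow_ne_zero _ (h_sphere z hz).2.1))
    (continuousOn_const.div (by fun_prop) fun z hz =>
      mul_ne_zero (h_sphere z hz).1 (h_sphere z hz).2.1)
    (fun z hz => by
      rw [norm_div, norm_mul, mem_sphere_zero_iff_norm.1 hz, one_mul]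
      exact div_le_self (norm_nonneg _) (h_sphere z hz).2.2)
    hy
  convert hsum using 1
  · funext n
    rw [← smul_eq_mul, ← circleIntegral.integral_smul_const]
    refine circleIntegral.integral_congr zero_le_one fun z hz => ?_
    obtain ⟨h0, h2, -⟩ := h_sphere z hz
    simp only [smul_eq_mul, zpow_add₀ h2, zpow_natCast, zpow_one, div_pow, mul_pow]
    field_simp
    ring
  · refine circleIntegral.integral_congr zero_le_one fun z hz => ?_
    obtain ⟨h0, h2, h2_norm⟩ := h_sphere z hz
    have hy' : z * (z + 2) - y ≠ 0 := sub_ne_zero.2 fun h => by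
      rw [← h, norm_mul, mem_sphere_zero_iff_norm.1 hz, one_mul] at hy
      linarith
    rw [zpow_add₀ h2, zpow_one]
    field_simp

theorem circleIntegral_exp_div_zpow_mul_sub_eq (x y s : ℂ) (α : ℤ) (hy : ‖y‖ < 1) (hs : s ^ 2 = y + 1)
    (hs_re : 0 < s.re) :
    (∮ z in C(0, 1), exp (x * z) / ((z + 2) ^ α * (z * (z + 2) - y))) =
      2 * Real.pi * I * (exp (x * (s - 1)) / (2 * s * (s + 1) ^ α)) := by
  have hs_add : 1 < ‖s + 1‖ := by
    have : 1 < (s + 1).re := by simp only [add_re, one_re]; linarith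
    linarith [re_le_norm (s + 1)]
  have hs_sub : ‖s - 1‖ < 1 := by
    have h : ‖s - 1‖ * ‖s + 1‖ = ‖y‖ := by
      rw [← norm_mul, show y = (s - 1) * (s + 1) by linear_combination -hs]
    nlinarith [norm_nonneg (s - 1)]
  set f : ℂ → ℂ := fun z => exp (x * z) / ((z + 2) ^ α * (z + s + 1))
  have hf : DifferentiableOn ℂ f (closedBall 0 1) := by
    intro z hz
    rw [mem_closedBall_zero_iff] at hz
    have h2 : z + 2 ≠ 0 := norm_ne_zero_iff.1 (by linarith [one_le_norm_add_two hz])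
    have hzs : z + s + 1 ≠ 0 := fun h => by
      rw [show z = -(s + 1) by linear_combination h, norm_neg] at hz
      linarith
    refine DifferentiableAt.differentiableWithinAt ?_
    refine DifferentiableAt.div (by fun_prop) ?_ (mul_ne_zero (zpow_ne_zero _ h2) hzs)
    exact (((differentiableAt_id (x := z)).add_const 2).zpow (Or.inl h2)).mul (by fun_prop)
  have hcauchy := hf.circleIntegral_sub_inv_smul (c := 0) (w := s - 1)
    (by rwa [mem_ball_zero_iff])
  have hfactor : ∀ z, z * (z + 2) - y = (z - (s - 1)) * (z + s + 1) := fun z => by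
    linear_combination hs
  simp only [hfactor]
  convert hcauchy using 1
  · simp only [f, smul_eq_mul, div_eq_mul_inv, mul_inv]
    congr 1
    funext z
    ring
  · simp only [f, smul_eq_mul]
    ring_nf

theorem stmt_16 (α : ℤ) (P : ℕ → ℂ → ℂ)
    (hP : ∀ n x, P n x = (2 * Real.pi * Complex.I)⁻¹ *
      ∮ z in C(0, 1), Complex.exp (x * z) / (z ^ (n + 1) * (z + 2) ^ ((n : ℤ) + 1 + α))) :
    ∀ x : ℂ, ∀ y : ℂ, ‖y‖ < 1 →
      HasSum (fun n : ℕ => P n x * y ^ n)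
        (Complex.exp (-x) * Complex.exp (x * (y + 1) ^ ((1 : ℂ) / 2)) /
          (2 * (y + 1) ^ ((1 : ℂ) / 2) * ((y + 1) ^ ((1 : ℂ) / 2) + 1) ^ α)) := by
  intro x y hy
  have hs : ((y + 1) ^ ((1 : ℂ) / 2)) ^ 2 = y + 1 := by
    simpa only [one_div, Nat.cast_ofNat] using cpow_nat_inv_pow (y + 1) two_ne_zero
  have hs_re := re_cpow_one_half_pos (re_add_one_pos_of_norm_lt_one hy)
  generalize (y + 1) ^ ((1 : ℂ) / 2) = s at hs hs_re ⊢
  have hsum := (hasSum_circleIntegral_exp_div_mul_pow x y α hy).mul_left (2 * Real.pi * I)⁻¹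
  rw [circleIntegral_exp_div_zpow_mul_sub_eq x y s α hy hs hs_re, inv_mul_cancel_left₀ two_pi_I_ne_zero]
    at hsum
  rw [← exp_add, neg_add_eq_sub, ← mul_sub_one]
  simpa only [hP, mul_assoc] using hsum
end

section
/- For all x ∈ ℝ and all y ∈ ℂ, Σ_{s=0}^∞ Φ_{2s+1}(x) y^s = sinh(x√(y+1))/√(y+1), where the right-hand side is interpreted via the entire function Σ_{k≥0} x^{2k+1}(y+1)^k/(2k+1)!. -/
open Metric Complex

/-!
Deform the contour to a circle of radius `R` with `‖y‖ < R ^ 2 - 1`. There the geometric series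
`∑ yˢ / (z ^ 2 - 1) ^ (s + 1) = 1 / (z ^ 2 - 1 - y)` converges uniformly, so the left side equals
`(2πi)⁻¹ ∮ exp (x z) / (z ^ 2 - c)` with `c = y + 1`. Expanding `1 / (z ^ 2 - c)` geometrically
once more, the Cauchy formula for the derivatives of `exp (x z)` at `0` turns the `k`-th term into
`x ^ (2k + 1) c ^ k / (2k + 1)!`.
-/

theorem hasSum_circleIntegral_of_dominated {ι E : Type*} [Countable ι] [NormedAddCommGroup E]
    [NormedSpace ℂ E] {c : ℂ} {R : ℝ} (hR : 0 ≤ R) {F : ι → ℂ → E} {f : ℂ → E}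
    (hF : ∀ i, ContinuousOn (F i) (sphere c R)) {C : ι → ℝ} (hC : Summable C)
    (hFC : ∀ i, ∀ z ∈ sphere c R, ‖F i z‖ ≤ C i)
    (hFf : ∀ z ∈ sphere c R, HasSum (fun i => F i z) (f z)) :
    HasSum (fun i => ∮ z in C(c, R), F i z) (∮ z in C(c, R), f z) := by
  have hmem := circleMap_mem_sphere c hR
  refine intervalIntegral.hasSum_integral_of_dominated_convergence (fun i _ => R * C i)
    (fun i => ?_) (fun i => ?_) (.of_forall fun _ _ => hC.mul_left R) intervalIntegrable_const
    (.of_forall fun θ _ => (hFf _ (hmem θ)).const_smul _)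
  · simp only [deriv_circleMap]
    exact (((continuous_circleMap 0 R).mul continuous_const).smul
      ((hF i).comp_continuous (continuous_circleMap c R) hmem)).aestronglyMeasurable
  · refine .of_forall fun θ _ => ?_
    simp only [deriv_circleMap, norm_smul, norm_mul, norm_circleMap_zero, norm_I, mul_one,
      abs_of_nonneg hR]
    exact mul_le_mul_of_nonneg_left (hFC i _ (hmem θ)) hR

theorem hasSum_pow_div_pow_succ {𝕜 : Type*} [NormedField 𝕜] [CompleteSpace 𝕜] {q y : 𝕜}
    (h : ‖y‖ < ‖q‖) : HasSum (fun s : ℕ => y ^ s / q ^ (s + 1)) (q - y)⁻¹ := by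
  have hq : q ≠ 0 := norm_pos_iff.1 ((norm_nonneg y).trans_lt h)
  have hyq : ‖y / q‖ < 1 := by rwa [norm_div, div_lt_one ((norm_nonneg y).trans_lt h)]
  convert (hasSum_geometric_of_norm_lt_one hyq).div_const q using 1
  · ext s; rw [div_pow, pow_succ, div_div]
  · have : q - y ≠ 0 := sub_ne_zero.2 fun h' => h.ne (by rw [h'])
    field_simp

theorem hasSum_circleIntegral_geometric {g q : ℂ → ℂ} {c y : ℂ} {R δ : ℝ} (hR : 0 ≤ R)
    (hg : ContinuousOn g (sphere c R)) (hq : ContinuousOn q (sphere c R)) (hyδ : ‖y‖ < δ)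
    (hqδ : ∀ z ∈ sphere c R, δ ≤ ‖q z‖) :
    HasSum (fun s : ℕ => y ^ s * ∮ z in C(c, R), g z / q z ^ (s + 1))
      (∮ z in C(c, R), g z / (q z - y)) := by
  have hδ : 0 < δ := (norm_nonneg y).trans_lt hyδ
  have hq0 : ∀ z ∈ sphere c R, q z ≠ 0 := fun z hz =>
    norm_pos_iff.1 (hδ.trans_le (hqδ z hz))
  obtain ⟨M, hM⟩ := (isCompact_sphere c R).exists_bound_of_continuousOn hg
  simp only [← circleIntegral.integral_const_mul]
  refine hasSum_circleIntegral_of_dominated hR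
    (fun s => continuousOn_const.mul (hg.div (hq.pow _) fun z hz => pow_ne_zero _ (hq0 z hz)))
    ((summable_geometric_of_lt_one (by positivity) ((div_lt_one hδ).2 hyδ)).mul_left (M / δ))
    (fun s z hz => ?_) (fun z hz => ?_)
  · have hM0 : 0 ≤ M := (norm_nonneg _).trans (hM z hz)
    calc ‖y ^ s * (g z / q z ^ (s + 1))‖ = ‖y‖ ^ s * (‖g z‖ / ‖q z‖ ^ (s + 1)) := by
          rw [norm_mul, norm_div, norm_pow, norm_pow]
      _ ≤ ‖y‖ ^ s * (M / δ ^ (s + 1)) := by gcongr; exacts [hM z hz, hqδ z hz]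
      _ = M / δ * (‖y‖ / δ) ^ s := by rw [div_pow, pow_succ]; field_simp
  · have h := (hasSum_pow_div_pow_succ (hyδ.trans_le (hqδ z hz))).mul_left (g z)
    rw [← div_eq_mul_inv] at h
    exact h.congr_fun fun s => by ring

theorem circleIntegral_eq_of_differentiableOn_compl_closedBall {E : Type*}
    [NormedAddCommGroup E] [NormedSpace ℂ E] [CompleteSpace E] {f : ℂ → E} {c : ℂ} {ρ r R : ℝ}
    (hρ : 0 ≤ ρ) (hρr : ρ < r) (hrR : r ≤ R) (hf : DifferentiableOn ℂ f (closedBall c ρ)ᶜ) :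
    (∮ z in C(c, R), f z) = ∮ z in C(c, r), f z := by
  have hsub : closedBall c R \ ball c r ⊆ (closedBall c ρ)ᶜ := fun z hz =>
    fun hz' => hz.2 (closedBall_subset_ball hρr hz')
  refine circleIntegral_eq_of_differentiable_on_annulus_off_countable (hρ.trans_lt hρr) hrR
    Set.countable_empty (hf.continuousOn.mono hsub) fun z hz => hf.differentiableAt ?_
  exact isClosed_closedBall.isOpen_compl.mem_nhds
    (hsub ⟨ball_subset_closedBall hz.1.1, fun h => hz.1.2 (ball_subset_closedBall h)⟩)

theorem circleIntegral_exp_mul_div_sq_pow (x : ℂ) {R : ℝ} (hR : 0 < R) (k : ℕ) :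
    (∮ z in C(0, R), exp (x * z) / (z ^ 2) ^ (k + 1)) =
      2 * Real.pi * I * (x ^ (2 * k + 1) / (2 * k + 1).factorial) := by
  have := (differentiable_exp.comp (differentiable_id.const_mul x)).differentiableOn
    |>.circleIntegral_one_div_sub_center_pow_smul (c := 0) hR (2 * k + 1)
  simp only [Function.comp_def, id, iteratedDeriv_cexp_const_mul, mul_zero, exp_zero, mul_one,
    sub_zero, smul_eq_mul] at this
  convert this using 1
  · congr 1; ext z
    rw [← pow_mul]; ring
  · ring

theorem hasSum_circleIntegral_exp_mul_div_sq_sub (x : ℂ) {c : ℂ} {R : ℝ} (hR : 0 < R)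
    (hc : ‖c‖ < R ^ 2) :
    HasSum (fun k : ℕ => x ^ (2 * k + 1) * c ^ k / (2 * k + 1).factorial)
      ((2 * Real.pi * I)⁻¹ * ∮ z in C(0, R), exp (x * z) / (z ^ 2 - c)) := by
  have h := hasSum_circleIntegral_geometric (g := fun z => exp (x * z)) (q := fun z => z ^ 2)
    hR.le (by fun_prop) (by fun_prop) hc (fun z hz => by
      rw [norm_pow, mem_sphere_zero_iff_norm.1 hz])
  simp only [circleIntegral_exp_mul_div_sq_pow x hR] at h
  refine (h.mul_left (2 * Real.pi * I)⁻¹).congr_fun fun k => ?_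
  rw [mul_left_comm, inv_mul_cancel_left₀ two_pi_I_ne_zero]
  ring

theorem stmt_17 (r : ℝ) (hr : 1 < r) (Φ : ℕ → ℂ → ℂ)
    (hΦ : ∀ s x, Φ s x = (2 * Real.pi * Complex.I)⁻¹ *
      ∮ z in C(0, r), Complex.exp (x * z) / ((z - 1) ^ (s + 1) * (z + 1) ^ (s + 1))) :
    ∀ x : ℝ, ∀ y : ℂ,
      HasSum (fun s : ℕ => Φ s x * y ^ s)
        (∑' k : ℕ, (x : ℂ) ^ (2 * k + 1) * (y + 1) ^ k / ((2 * k + 1).factorial : ℂ)) := by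
  intro x y
  set R := r + ‖y‖
  have hrR : r ≤ R := le_add_of_nonneg_right (norm_nonneg y)
  have hyR : ‖y‖ < R ^ 2 - 1 := by nlinarith [norm_nonneg y]
  have hsq : ∀ z : ℂ, (z - 1) * (z + 1) = z ^ 2 - 1 := fun z => by ring
  have hsq_norm : ∀ z : ℂ, ‖z‖ ^ 2 - 1 ≤ ‖z ^ 2 - 1‖ := fun z => by
    rw [← norm_pow, ← norm_one (α := ℂ)]
    exact norm_sub_norm_le _ _
  have hΦR : ∀ s, Φ s x = (2 * Real.pi * I)⁻¹ *
      ∮ z in C(0, R), exp (x * z) / (z ^ 2 - 1) ^ (s + 1) := fun s => by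
    simp only [hΦ, ← mul_pow, hsq]
    congr 1
    refine (circleIntegral_eq_of_differentiableOn_compl_closedBall zero_le_one hr hrR ?_).symm
    refine .div (by fun_prop) (by fun_prop) fun z hz => pow_ne_zero _ (norm_pos_iff.1 ?_)
    have : 1 < ‖z‖ := by simpa using hz
    nlinarith [hsq_norm z]
  have hgeom := hasSum_circleIntegral_geometric (g := fun z => exp (x * z))
    (q := fun z => z ^ 2 - 1) (c := 0) (R := R) (by linarith) (by fun_prop) (by fun_prop) hyR
    (fun z hz => by simpa [mem_sphere_zero_iff_norm.1 hz] using hsq_norm z)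
  have hsinh := hasSum_circleIntegral_exp_mul_div_sq_sub x (c := y + 1) (R := R) (by linarith)
    (by linarith [norm_add_le y 1, norm_one (α := ℂ)])
  simp only [sub_sub, add_comm (1 : ℂ) y] at hgeom
  rw [hsinh.tsum_eq]
  exact (hgeom.mul_left _).congr_fun fun s => by rw [hΦR]; ring
end

section
/- Let λⱼ alternate: λ_{2j} = 1, λ_{2j+1} = −1, and let Φ_n := Φ_{(λ₀,...,λ_{n})} be the corresponding fundamental functions. Then Σ_{n=0}^∞ Φ_{(λ₀,...,λₙ)}(x) yⁿ = (1+y)/√(y²+1) · sinh(x√(y²+1)) + cosh(x√(y²+1)). -/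
/-!
For `r > 1` the circle encloses both eigenvalues `±1`, and
`∏_{j ≤ 2s+1} (z - (-1)^j) = (z² - 1)^(s+1)`. Expanding `exp (x z) z^d / (z² - 1)^(s+1)` into a
Laurent series on the circle and keeping the residue term gives
`Φ_{2s+1}(x) = ∑_k C(k+s, s) x^(2(s+k)+1) / (2(s+k)+1)!`; likewise `Φ_{2s} - Φ_{2s+1}`
(that is, `d/dx Φ_{2s+1}`) is the integral of `exp (x z) z / (z² - 1)^(s+1)` and has the even
Taylor coefficients in its place. Multiplying by `t^s`, summing over `s` and regrouping along
`m = s + k`, the binomial theorem turns `∑_s C(m, s) t^s` into `(t + 1)^m`; with `t = y²` the even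
and odd parts of the series give the two sums of the claim.
-/

open Complex MeasureTheory Metric Real Finset

lemma circleIntegral_zpow {R : ℝ} (hR : 0 < R) (n : ℤ) :
    (∮ z in C(0, R), z ^ n) = if n = -1 then 2 * π * I else 0 := by
  split_ifs with h
  · subst h
    simpa [zpow_neg] using circleIntegral.integral_sub_inv_of_mem_ball (c := 0) (w := 0)
      (mem_ball_self hR)
  · simpa using circleIntegral.integral_sub_zpow_of_ne h 0 0 R

lemma hasSum_circleIntegral_of_hasSum_zpow {ι : Type*} [Countable ι] {R : ℝ} (hR : 0 < R)
    {a : ι → ℂ} {e : ι → ℤ} {f : ℂ → ℂ}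
    (hf : ∀ z ∈ sphere (0 : ℂ) R, HasSum (fun i => a i * z ^ e i) (f z))
    (ha : Summable fun i => ‖a i‖ * R ^ e i) :
    HasSum (fun i => if e i = -1 then 2 * π * I * a i else 0) (∮ z in C(0, R), f z) := by
  have hterm : ∀ i,
      (∮ z in C(0, R), a i * z ^ e i) = if e i = -1 then 2 * π * I * a i else 0 := by
    intro i
    rw [circleIntegral.integral_const_mul, circleIntegral_zpow hR]
    split_ifs <;> ring
  have hne : ∀ θ, circleMap 0 R θ ≠ 0 := fun θ => circleMap_ne_center hR.ne'
  simp only [← hterm, circleIntegral, deriv_circleMap]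
  refine intervalIntegral.hasSum_integral_of_dominated_convergence
    (fun i _ => R * (‖a i‖ * R ^ e i)) (fun i => ?_) (fun i => ?_) ?_ ?_ ?_
  · exact (((continuous_circleMap 0 R).mul continuous_const).smul (continuous_const.mul
      ((continuous_circleMap 0 R).zpow₀ _ fun θ => Or.inl (hne θ)))).aestronglyMeasurable
  · refine Filter.Eventually.of_forall fun θ _ => le_of_eq ?_
    simp [norm_circleMap_zero, abs_of_pos hR]
  · exact Filter.Eventually.of_forall fun _ _ => ha.mul_left R
  · exact intervalIntegrable_const
  · exact Filter.Eventually.of_forall fun θ _ =>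
      (hf _ (circleMap_mem_sphere 0 hR.le θ)).const_smul _

noncomputable def expCoeff (x : ℂ) (n : ℕ) : ℂ := x ^ n / n.factorial

lemma hasSum_expCoeff (x : ℂ) : HasSum (expCoeff x) (exp x) := by
  rw [exp_eq_exp_ℂ]
  exact NormedSpace.expSeries_div_hasSum_exp x

lemma norm_expCoeff (x : ℂ) (n : ℕ) : ‖expCoeff x n‖ = ‖x‖ ^ n / n.factorial := by
  simp [expCoeff]

lemma summable_norm_expCoeff (x : ℂ) : Summable fun n => ‖expCoeff x n‖ := by
  simpa only [norm_expCoeff] using Real.summable_pow_div_factorial ‖x‖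

lemma summable_norm_expCoeff_two_mul_add_mul_pow (x : ℂ) (c : ℕ) (u : ℝ) :
    Summable fun m => ‖expCoeff x (2 * m + c)‖ * u ^ m := by
  refine Summable.of_norm_bounded
    ((Real.summable_pow_div_factorial (‖x‖ ^ 2 * |u|)).mul_left (‖x‖ ^ c)) fun m => ?_
  rw [norm_mul, norm_norm, norm_pow, Real.norm_eq_abs, norm_expCoeff]
  calc ‖x‖ ^ (2 * m + c) / (2 * m + c).factorial * |u| ^ m
      = ‖x‖ ^ c * (‖x‖ ^ 2 * |u|) ^ m / (2 * m + c).factorial := by ring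
    _ ≤ ‖x‖ ^ c * (‖x‖ ^ 2 * |u|) ^ m / m.factorial :=
      div_le_div_of_nonneg_left (by positivity) (by positivity)
        (by exact_mod_cast Nat.factorial_le (by omega))
    _ = ‖x‖ ^ c * ((‖x‖ ^ 2 * |u|) ^ m / m.factorial) := by ring

lemma hasSum_exp_mul_pow_div_sq_sub_one_pow (X : ℂ) (S d : ℕ) {z : ℂ} (hz : 1 < ‖z‖) :
    HasSum (fun p : ℕ × ℕ => expCoeff X p.1 * (p.2 + S).choose S *
        z ^ (((p.1 + d : ℕ) : ℤ) - (2 * (S + 1 + p.2) : ℕ)))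
      (exp (X * z) * z ^ d / (z ^ 2 - 1) ^ (S + 1)) ∧
    Summable fun p : ℕ × ℕ => ‖expCoeff X p.1 * (p.2 + S).choose S *
        z ^ (((p.1 + d : ℕ) : ℤ) - (2 * (S + 1 + p.2) : ℕ))‖ := by
  have hz0 : z ≠ 0 := norm_pos_iff.mp (one_pos.trans hz)
  have hw : ‖(z ^ 2)⁻¹‖ < 1 := by
    rw [norm_inv, norm_pow]
    exact inv_lt_one_of_one_lt₀ (one_lt_pow₀ hz two_ne_zero)
  have hv : Summable fun k : ℕ => ‖((k + S).choose S : ℂ) * (z ^ 2)⁻¹ ^ k‖ := by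
    have := summable_choose_mul_geometric_of_norm_lt_one (R := ℝ) S
      (r := ‖(z ^ 2)⁻¹‖) (by rwa [norm_norm])
    simpa [norm_mul, norm_pow] using this
  have hsum := (summable_norm_expCoeff (X * z)).mul_norm hv
  have hprod := (hasSum_expCoeff (X * z)).mul
    (hasSum_choose_mul_geometric_of_norm_lt_one S hw) hsum.of_norm
  have hterm : ∀ p : ℕ × ℕ, expCoeff X p.1 * (p.2 + S).choose S *
        z ^ (((p.1 + d : ℕ) : ℤ) - (2 * (S + 1 + p.2) : ℕ)) =
      z ^ d / (z ^ 2) ^ (S + 1) *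
        (expCoeff (X * z) p.1 * (((p.2 + S).choose S : ℂ) * (z ^ 2)⁻¹ ^ p.2)) := by
    rintro ⟨m, k⟩
    rw [zpow_sub₀ hz0, zpow_natCast, zpow_natCast]
    simp only [expCoeff, mul_add, pow_add, pow_mul, inv_pow]
    field_simp
    ring
  have hval : exp (X * z) * z ^ d / (z ^ 2 - 1) ^ (S + 1) =
      z ^ d / (z ^ 2) ^ (S + 1) * (exp (X * z) * (1 / (1 - (z ^ 2)⁻¹) ^ (S + 1))) := by
    have : z ^ 2 - 1 = z ^ 2 * (1 - (z ^ 2)⁻¹) := by field_simp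
    rw [this, mul_pow]
    field_simp
  refine ⟨?_, ?_⟩
  · simp only [hterm, hval]
    exact hprod.mul_left _
  · simpa only [hterm, norm_mul] using hsum.mul_left ‖z ^ d / (z ^ 2) ^ (S + 1)‖

lemma hasSum_circleIntegral_exp_mul_pow_div {r : ℝ} (hr : 1 < r) (X : ℂ) {S d : ℕ}
    (hd : d ≤ 2 * S + 1) :
    HasSum (fun k => ((k + S).choose S : ℂ) * expCoeff X (2 * (S + k) + 1 - d))
      ((2 * π * I)⁻¹ * ∮ z in C(0, r), exp (X * z) * z ^ d / (z ^ 2 - 1) ^ (S + 1)) := by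
  have hr0 : 0 < r := one_pos.trans hr
  have hres := hasSum_circleIntegral_of_hasSum_zpow hr0
    (fun z hz => (hasSum_exp_mul_pow_div_sq_sub_one_pow X S d
      (by rwa [mem_sphere_zero_iff_norm.mp hz])).1) (by
        simpa [norm_mul, norm_zpow, abs_of_pos hr0] using
          (hasSum_exp_mul_pow_div_sq_sub_one_pow X S d
            (z := r) (by simpa [abs_of_pos hr0] using hr)).2)
  -- the exponent `m + d - 2 (S + 1 + k)` is `-1` exactly at `m = 2 (S + k) + 1 - d`
  set g : ℕ → ℕ × ℕ := fun k => (2 * (S + k) + 1 - d, k)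
  have hg : Function.Injective g := fun k l hkl => congrArg Prod.snd hkl
  rw [← hg.hasSum_iff] at hres
  · refine (hres.mul_left (2 * π * I)⁻¹).congr_fun fun k => ?_
    simp only [Function.comp, g]
    rw [if_pos (by omega), ← mul_assoc, inv_mul_cancel₀ two_pi_I_ne_zero, one_mul, mul_comm]
  · rintro ⟨m, k⟩ hmk
    rw [if_neg]
    exact fun he => hmk ⟨k, by simp only [g]; congr 1; omega⟩

lemma prod_range_two_mul_sub_neg_one_pow {R : Type*} [CommRing R] (z : R) (s : ℕ) :
    ∏ j ∈ Finset.range (2 * s), (z - (-1) ^ j) = (z ^ 2 - 1) ^ s := by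
  induction s with
  | zero => simp
  | succ s ih =>
    have h_even : (-1 : R) ^ (2 * s) = 1 := by rw [pow_mul, neg_one_sq, one_pow]
    rw [show 2 * (s + 1) = 2 * s + 1 + 1 by ring, Finset.prod_range_succ, Finset.prod_range_succ,
      ih, pow_succ (-1 : R) (2 * s), h_even]
    ring

lemma prod_fin_sub_neg_one_pow_two_mul_add_two {R : Type*} [CommRing R] (z : R) (s : ℕ) :
    ∏ j : Fin (2 * s + 1 + 1), (z - (-1) ^ (j : ℕ)) = (z ^ 2 - 1) ^ (s + 1) := by
  rw [Fin.prod_univ_eq_prod_range (fun j => z - (-1) ^ j),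
    show 2 * s + 1 + 1 = 2 * (s + 1) by ring, prod_range_two_mul_sub_neg_one_pow]

lemma prod_fin_sub_neg_one_pow_two_mul_add_one {R : Type*} [CommRing R] (z : R) (s : ℕ) :
    ∏ j : Fin (2 * s + 1), (z - (-1) ^ (j : ℕ)) = (z ^ 2 - 1) ^ s * (z - 1) := by
  rw [Fin.prod_univ_eq_prod_range (fun j => z - (-1) ^ j), Finset.prod_range_succ,
    prod_range_two_mul_sub_neg_one_pow, pow_mul, neg_one_sq, one_pow]

/-- The fundamental function `Φ_{(λ₀,…,λₙ)}` of `∏ⱼ (d/dx - λⱼ)` for `λⱼ = (-1)^j`, written as a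
Cauchy integral over a circle enclosing the eigenvalues `±1`. -/
noncomputable def altFundamental (r : ℝ) (n : ℕ) (x : ℂ) : ℂ :=
  (2 * π * I)⁻¹ * ∮ z in C(0, r), exp (x * z) / ∏ j : Fin (n + 1), (z - (-1 : ℂ) ^ (j : ℕ))

lemma hasSum_altFundamental_two_mul_add_one {r : ℝ} (hr : 1 < r) (x : ℂ) (s : ℕ) :
    HasSum (fun k => ((k + s).choose s : ℂ) * expCoeff x (2 * (s + k) + 1))
      (altFundamental r (2 * s + 1) x) := by
  simpa [altFundamental, prod_fin_sub_neg_one_pow_two_mul_add_two] using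
    hasSum_circleIntegral_exp_mul_pow_div hr x (S := s) (d := 0) (by omega)

lemma hasSum_altFundamental_two_mul_sub {r : ℝ} (hr : 1 < r) (x : ℂ) (s : ℕ) :
    HasSum (fun k => ((k + s).choose s : ℂ) * expCoeff x (2 * (s + k)))
      (altFundamental r (2 * s) x - altFundamental r (2 * s + 1) x) := by
  have hr0 : 0 < r := one_pos.trans hr
  have hne : ∀ z ∈ sphere (0 : ℂ) r, ∀ w : ℂ, ‖w‖ = 1 → z - w ≠ 0 := by
    rintro z hz w hw h
    rw [sub_eq_zero.mp h, mem_sphere_zero_iff_norm, hw] at hz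
    exact hr.ne hz
  have hsq : ∀ z ∈ sphere (0 : ℂ) r, z ^ 2 - 1 ≠ 0 := fun z hz => by
    rw [show z ^ 2 - 1 = (z - 1) * (z - -1) by ring]
    exact mul_ne_zero (hne z hz 1 (by simp)) (hne z hz (-1) (by simp))
  have hdiff : Set.EqOn
      (fun z => exp (x * z) / ((z ^ 2 - 1) ^ s * (z - 1)) - exp (x * z) / (z ^ 2 - 1) ^ (s + 1))
      (fun z => exp (x * z) * z ^ 1 / (z ^ 2 - 1) ^ (s + 1)) (sphere (0 : ℂ) r) := by
    intro z hz
    have h₁ := hne z hz 1 (by simp)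
    have h₂ := hsq z hz
    dsimp only
    field_simp
    ring
  have hint₁ : CircleIntegrable (fun z => exp (x * z) / ((z ^ 2 - 1) ^ s * (z - 1))) 0 r :=
    ContinuousOn.circleIntegrable hr0.le (.div (by fun_prop) (by fun_prop)
      fun z hz => mul_ne_zero (pow_ne_zero _ (hsq z hz)) (hne z hz 1 (by simp)))
  have hint₂ : CircleIntegrable (fun z => exp (x * z) / (z ^ 2 - 1) ^ (s + 1)) 0 r :=
    ContinuousOn.circleIntegrable hr0.le (.div (by fun_prop) (by fun_prop)
      fun z hz => pow_ne_zero _ (hsq z hz))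
  have h := hasSum_circleIntegral_exp_mul_pow_div hr x (S := s) (d := 1) (by omega)
  rw [← circleIntegral.integral_congr hr0.le hdiff, circleIntegral.integral_sub hint₁ hint₂,
    mul_sub] at h
  simpa [altFundamental, prod_fin_sub_neg_one_pow_two_mul_add_two,
    prod_fin_sub_neg_one_pow_two_mul_add_one] using h

lemma hasSum_of_summable_sum_norm_antidiagonal {A E : Type*} [AddMonoid A] [HasAntidiagonal A]
    [NormedAddCommGroup E] [CompleteSpace E] {G : A × A → E}
    (h : Summable fun n => ∑ p ∈ antidiagonal n, ‖G p‖) :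
    HasSum G (∑' n, ∑ p ∈ antidiagonal n, G p) := by
  let e := HasAntidiagonal.sigmaAntidiagonalEquivProd (A := A)
  have hnorm : Summable fun q => ‖G (e q)‖ :=
    (summable_sigma_of_nonneg fun _ => norm_nonneg _).mpr
      ⟨fun _ => .of_finite, by
        simpa only [e, HasAntidiagonal.sigmaAntidiagonalEquivProd_apply,
          Finset.tsum_subtype (f := fun p => ‖G p‖)] using h⟩
  rw [← e.hasSum_iff]
  show HasSum (fun q => G (e q)) _
  convert hnorm.of_norm.hasSum using 1
  rw [hnorm.of_norm.tsum_sigma]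
  exact tsum_congr fun n => (Finset.tsum_subtype _ G).symm

lemma sum_antidiagonal_choose_mul_mul_pow {R : Type*} [CommSemiring R] (a : ℕ → R) (u : R)
    (m : ℕ) :
    ∑ p ∈ antidiagonal m, ((p.2 + p.1).choose p.1 : R) * a (p.1 + p.2) * u ^ p.1 =
      a m * (u + 1) ^ m := by
  rw [(Commute.one_right u).add_pow', mul_sum]
  refine sum_congr rfl fun p hp => ?_
  rw [add_comm p.2, mem_antidiagonal.mp hp, nsmul_eq_mul, one_pow, mul_one]
  ring

lemma hasSum_mul_pow_of_hasSum_choose_mul {φ c : ℕ → ℂ} {t : ℂ}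
    (hφ : Summable fun m => ‖φ m‖ * (‖t‖ + 1) ^ m)
    (hc : ∀ s, HasSum (fun k => ((k + s).choose s : ℂ) * φ (s + k)) (c s)) :
    HasSum (fun s => c s * t ^ s) (∑' m, φ m * (t + 1) ^ m) := by
  set G : ℕ × ℕ → ℂ := fun p => ((p.2 + p.1).choose p.1 : ℂ) * φ (p.1 + p.2) * t ^ p.1
  have hnorm : ∀ p, ‖G p‖ = ((p.2 + p.1).choose p.1 : ℝ) * ‖φ (p.1 + p.2)‖ * ‖t‖ ^ p.1 := by
    simp [G]
  have hG := hasSum_of_summable_sum_norm_antidiagonal (G := G) (by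
    simpa only [hnorm, sum_antidiagonal_choose_mul_mul_pow (fun m => ‖φ m‖)] using hφ)
  simp only [G, sum_antidiagonal_choose_mul_mul_pow] at hG
  exact hG.prod_fiberwise fun s => (hc s).mul_right (t ^ s)

theorem stmt_18 (r : ℝ) (hr : 1 < r) (Φ : ℕ → ℂ → ℂ)
    (hΦ : ∀ n x, Φ n x = (2 * Real.pi * Complex.I)⁻¹ *
      ∮ z in C(0, r), Complex.exp (x * z) / ∏ j : Fin (n + 1), (z - (-1 : ℂ) ^ (j : ℕ))) :
    ∀ x : ℝ, ∀ y : ℂ,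
      HasSum (fun n : ℕ => Φ n x * y ^ n)
        ((1 + y) * (∑' k : ℕ, (x : ℂ) ^ (2 * k + 1) * (y ^ 2 + 1) ^ k / ((2 * k + 1).factorial : ℂ)) +
          ∑' k : ℕ, (x : ℂ) ^ (2 * k) * (y ^ 2 + 1) ^ k / ((2 * k).factorial : ℂ)) := by
  intro x y
  obtain rfl : Φ = altFundamental r := funext₂ hΦ
  have hodd := hasSum_mul_pow_of_hasSum_choose_mul (t := y ^ 2)
    (summable_norm_expCoeff_two_mul_add_mul_pow x 1 _)
    (hasSum_altFundamental_two_mul_add_one hr x)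
  have hdiff := hasSum_mul_pow_of_hasSum_choose_mul (t := y ^ 2)
    (φ := fun m => expCoeff x (2 * m)) (summable_norm_expCoeff_two_mul_add_mul_pow x 0 _)
    (hasSum_altFundamental_two_mul_sub hr x)
  have heven := hdiff.add hodd
  simp only [← add_mul, sub_add_cancel] at heven
  have h := HasSum.even_add_odd (f := fun n => altFundamental r n x * y ^ n)
    (by simpa only [pow_mul] using heven)
    ((hodd.mul_right y).congr_fun fun k => by ring)
  simp only [expCoeff, div_mul_eq_mul_div] at h
  convert h using 1
  ring
end
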